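/- arXiv:2312.12840 — 8 statements merged into one kernel-verified Lean document; each statement's English description precedes it below -/
import Mathlib

section
/- Let k ≥ 1 be an integer, m > 1, and suppose there are constants 0 < c₁ < c₂ with c₁ x^m ≤ f(x) ≤ c₂ x^m for all x in a neighborhood of [0,1], where f : [0,∞) → [0,∞) is continuous and strictly increasing with f(0)=0. Then for each M > 0 there exists a constant C > 0 such that ∫₀¹ r^{k-1}/(f(r)+t)^k dr ≤ C · [f⁻¹(t)]^k / t^k for all 0 < t < M. -/
/-! Put `a = f⁻¹(t)`. On `[0, a]` the denominator is at least `t^k`, which contributes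
`a^k / (k t^k)`. If `a < 1`, then on `[a, 1]` it is at least `(c₁ r^m)^k`, and since `m > 1`
the integral of `r^(k-1-mk)` over `[a, ∞)` is `a^(k-mk) / (k(m-1))`; finally `t = f a ≤ c₂ a^m`
turns `a^(-mk)` into at most `c₂^k / t^k`. -/

open Set intervalIntegral

lemma integral_rpow_le_of_lt_neg_one {a b p : ℝ} (ha : 0 < a) (hab : a ≤ b) (hp : p < -1) :
    ∫ r in a..b, r ^ p ≤ a ^ (p + 1) / -(p + 1) := by
  have h0 : (0 : ℝ) ∉ uIcc a b := by
    rw [uIcc_of_le hab]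
    exact fun h => ha.not_ge h.1
  rw [integral_rpow (Or.inr ⟨hp.ne, h0⟩), div_neg, ← neg_div]
  refine div_le_div_of_nonpos_of_le (by linarith) ?_
  linarith [Real.rpow_nonneg (ha.le.trans hab) (p + 1)]

variable {f : ℝ → ℝ} {k : ℕ} {t : ℝ}

lemma intervalIntegrable_pow_div_add_pow (j : ℕ) (ht : 0 < t) {x y : ℝ}
    (hcont : ContinuousOn f (uIcc x y)) (hf : ∀ r ∈ uIcc x y, 0 ≤ f r) :
    IntervalIntegrable (fun r => r ^ j / (f r + t) ^ k) MeasureTheory.volume x y := by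
  refine ContinuousOn.intervalIntegrable <| (continuous_pow _).continuousOn.div
    ((hcont.add continuousOn_const).pow k) fun r hr => ?_
  have := hf r hr
  positivity

lemma integral_pow_div_add_pow_le_of_nonneg (hk : 1 ≤ k) (ht : 0 < t) {b : ℝ} (hb : 0 ≤ b)
    (hf : ∀ r ∈ Icc 0 b, 0 ≤ f r)
    (hint : IntervalIntegrable (fun r => r ^ (k - 1) / (f r + t) ^ k) MeasureTheory.volume 0 b) :
    ∫ r in 0..b, r ^ (k - 1) / (f r + t) ^ k ≤ b ^ k / (k * t ^ k) := by
  calc ∫ r in 0..b, r ^ (k - 1) / (f r + t) ^ k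
      ≤ ∫ r in 0..b, r ^ (k - 1) / t ^ k := by
        refine integral_mono_on hb hint
          (((continuous_pow _).div_const _).intervalIntegrable _ _) fun r hr => ?_
        have := pow_nonneg hr.1 (k - 1)
        gcongr
        linarith [hf r hr]
    _ = b ^ k / (k * t ^ k) := by
        rw [integral_div, integral_pow, Nat.sub_add_cancel hk, Nat.cast_sub hk]
        simp [zero_pow (by omega : k ≠ 0), div_div]

lemma integral_pow_div_add_pow_le_of_rpow_le {a b m c : ℝ} (hk : 1 ≤ k) (ht : 0 ≤ t)
    (ha : 0 < a) (hab : a ≤ b) (hm : 1 < m) (hc : 0 < c)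
    (hf : ∀ r ∈ Icc a b, c * r ^ m ≤ f r)
    (hint : IntervalIntegrable (fun r => r ^ (k - 1) / (f r + t) ^ k) MeasureTheory.volume a b) :
    ∫ r in a..b, r ^ (k - 1) / (f r + t) ^ k
      ≤ a ^ ((k : ℝ) - m * k) / (c ^ k * (k * (m - 1))) := by
  have hk0 : (1 : ℝ) ≤ k := by exact_mod_cast hk
  have hp : (k : ℝ) - 1 - m * k < -1 := by nlinarith
  have hrpow : ∀ r > 0, r ^ (k - 1) / (c * r ^ m) ^ k = r ^ ((k : ℝ) - 1 - m * k) / c ^ k := by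
    intro r hr
    have hpow_m : (r ^ m) ^ k = r ^ (m * k) := by
      rw [← Real.rpow_natCast, ← Real.rpow_mul hr.le]
    have hpow_k : r ^ (k - 1) = r ^ ((k : ℝ) - 1) := by
      rw [← Real.rpow_natCast, Nat.cast_sub hk, Nat.cast_one]
    rw [mul_pow, hpow_m, hpow_k, Real.rpow_sub hr ((k : ℝ) - 1), div_div, mul_comm (c ^ k)]
  calc ∫ r in a..b, r ^ (k - 1) / (f r + t) ^ k
      ≤ ∫ r in a..b, r ^ ((k : ℝ) - 1 - m * k) / c ^ k := by
        have hcont :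
            ContinuousOn (fun r : ℝ => r ^ ((k : ℝ) - 1 - m * k) / c ^ k) (uIcc a b) := by
          rw [uIcc_of_le hab]
          exact fun r hr => ((Real.continuousAt_rpow_const r _
            (Or.inl (ha.trans_le hr.1).ne')).div_const _).continuousWithinAt
        refine integral_mono_on hab hint hcont.intervalIntegrable fun r hr => ?_
        have hr0 : 0 < r := ha.trans_le hr.1
        rw [← hrpow r hr0]
        have : 0 < c * r ^ m := by positivity
        gcongr
        linarith [hf r hr]
    _ ≤ a ^ ((k : ℝ) - m * k) / (c ^ k * (k * (m - 1))) := by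
        rw [integral_div, mul_comm (c ^ k), ← div_div]
        have := integral_rpow_le_of_lt_neg_one ha hab hp
        rw [show (k : ℝ) - 1 - m * k + 1 = k - m * k by ring,
          show -((k : ℝ) - m * k) = k * (m - 1) by ring] at this
        gcongr

lemma rpow_sub_mul_le_of_le_mul_rpow {a c m : ℝ} (k : ℕ) (ha : 0 < a) (ht : 0 < t)
    (htc : t ≤ c * a ^ m) : a ^ ((k : ℝ) - m * k) ≤ c ^ k * a ^ k / t ^ k := by
  have hpow : a ^ ((k : ℝ) - m * k) * (c * a ^ m) ^ k = c ^ k * a ^ k := by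
    rw [mul_pow, ← Real.rpow_natCast (a ^ m), ← Real.rpow_mul ha.le, Real.rpow_sub ha,
      Real.rpow_natCast]
    field_simp
  rw [le_div_iff₀ (pow_pos ht k), ← hpow]
  gcongr

lemma integral_pow_div_add_pow_le_of_lt_one {m c₁ c₂ a : ℝ} (hk : 1 ≤ k) (hm : 1 < m)
    (hc₁ : 0 < c₁) (ht : 0 < t) (ha : 0 < a) (ha1 : a < 1) (hcont : ContinuousOn f (Icc 0 1))
    (hf : ∀ r ∈ Icc (0 : ℝ) 1, c₁ * r ^ m ≤ f r) (hfa : t ≤ c₂ * a ^ m) :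
    ∫ r in (0 : ℝ)..1, r ^ (k - 1) / (f r + t) ^ k
      ≤ (1 / k + c₂ ^ k / (c₁ ^ k * (k * (m - 1)))) * a ^ k / t ^ k := by
  have hfnn : ∀ r ∈ Icc (0 : ℝ) 1, 0 ≤ f r := fun r hr =>
    (mul_nonneg hc₁.le (Real.rpow_nonneg hr.1 m)).trans (hf r hr)
  have hint : ∀ x ∈ Icc (0 : ℝ) 1, ∀ y ∈ Icc (0 : ℝ) 1,
      IntervalIntegrable (fun r => r ^ (k - 1) / (f r + t) ^ k) MeasureTheory.volume x y :=
    fun x hx y hy => intervalIntegrable_pow_div_add_pow _ ht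
      (hcont.mono (uIcc_subset_Icc hx hy)) fun r hr => hfnn r (uIcc_subset_Icc hx hy hr)
  have ha' : a ∈ Icc (0 : ℝ) 1 := ⟨ha.le, ha1.le⟩
  have h0 : (0 : ℝ) ∈ Icc (0 : ℝ) 1 := left_mem_Icc.2 zero_le_one
  have h1 : (1 : ℝ) ∈ Icc (0 : ℝ) 1 := right_mem_Icc.2 zero_le_one
  have hnear := integral_pow_div_add_pow_le_of_nonneg hk ht ha.le
    (fun r hr => hfnn r ⟨hr.1, hr.2.trans ha1.le⟩) (hint 0 h0 a ha')
  have htail := integral_pow_div_add_pow_le_of_rpow_le hk ht.le ha ha1.le hm hc₁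
    (fun r hr => hf r ⟨ha.le.trans hr.1, hr.2⟩) (hint a ha' 1 h1)
  have hpow := rpow_sub_mul_le_of_le_mul_rpow k ha ht hfa
  rw [← integral_add_adjacent_intervals (hint 0 h0 a ha') (hint a ha' 1 h1)]
  have hq : 0 < (k : ℝ) * (m - 1) := mul_pos (by exact_mod_cast hk) (by linarith)
  calc _ ≤ a ^ k / (k * t ^ k) + a ^ ((k : ℝ) - m * k) / (c₁ ^ k * (k * (m - 1))) :=
        add_le_add hnear htail
    _ ≤ a ^ k / (k * t ^ k) + c₂ ^ k * a ^ k / t ^ k / (c₁ ^ k * (k * (m - 1))) := by gcongr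
    _ = (1 / k + c₂ ^ k / (c₁ ^ k * (k * (m - 1)))) * a ^ k / t ^ k := by ring

theorem stmt_3_general (f finv : ℝ → ℝ) (k : ℕ) (hk : 1 ≤ k)
    (m c₁ c₂ : ℝ) (hm : 1 < m) (hc₁ : 0 < c₁) (hc₁₂ : c₁ < c₂)
    (ε : ℝ) (hε : 0 < ε)
    (hbound : ∀ x ∈ Set.Icc (0:ℝ) (1 + ε), c₁ * x ^ m ≤ f x ∧ f x ≤ c₂ * x ^ m)
    (hcont : ContinuousOn f (Set.Ici 0))
    (hf0 : f 0 = 0)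
    (hinv : ∀ t ≥ (0:ℝ), 0 ≤ finv t ∧ f (finv t) = t) :
    ∀ M > (0:ℝ), ∃ C > (0:ℝ), ∀ t : ℝ, 0 < t → t < M →
      (∫ r in (0:ℝ)..1, r ^ (k - 1) / (f r + t) ^ k) ≤ C * (finv t) ^ k / t ^ k := by
  intro M _
  have hc₂ : 0 < c₂ := hc₁.trans hc₁₂
  have hq : 0 < (k : ℝ) * (m - 1) := mul_pos (by exact_mod_cast hk) (by linarith)
  refine ⟨1 / k + c₂ ^ k / (c₁ ^ k * (k * (m - 1))), by positivity, fun t ht _ => ?_⟩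
  obtain ⟨ha0, hfa⟩ := hinv t ht.le
  have ha : 0 < finv t := ha0.lt_of_ne (by rintro h; rw [← h, hf0] at hfa; linarith)
  have hbound₁ : ∀ r ∈ Icc (0 : ℝ) 1, c₁ * r ^ m ≤ f r ∧ f r ≤ c₂ * r ^ m :=
    fun r hr => hbound r ⟨hr.1, by linarith [hr.2]⟩
  have hcont₁ : ContinuousOn f (Icc 0 1) := hcont.mono fun r hr => hr.1
  rcases lt_or_ge (finv t) 1 with ha1 | h1a
  · exact integral_pow_div_add_pow_le_of_lt_one hk hm hc₁ ht ha ha1 hcont₁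
      (fun r hr => (hbound₁ r hr).1) (hfa.symm.le.trans (hbound₁ _ ⟨ha0, ha1.le⟩).2)
  · have hfnn : ∀ r ∈ Icc (0 : ℝ) 1, 0 ≤ f r := fun r hr =>
      (mul_nonneg hc₁.le (Real.rpow_nonneg hr.1 m)).trans (hbound₁ r hr).1
    calc ∫ r in (0 : ℝ)..1, r ^ (k - 1) / (f r + t) ^ k
        ≤ 1 ^ k / (k * t ^ k) := integral_pow_div_add_pow_le_of_nonneg hk ht zero_le_one hfnn
          (intervalIntegrable_pow_div_add_pow _ ht (by rwa [uIcc_of_le zero_le_one])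
            (by rwa [uIcc_of_le zero_le_one]))
      _ = 1 / k * 1 / t ^ k := by ring
      _ ≤ (1 / k + c₂ ^ k / (c₁ ^ k * (k * (m - 1)))) * finv t ^ k / t ^ k := by
        gcongr
        · exact le_add_of_nonneg_right (by positivity)
        · exact one_le_pow₀ h1a

/-- the finite-type integral estimate
`∫₀¹ r^{k-1}/(f(r)+t)^k dr ≤ C·[f⁻¹(t)]^k / t^k` for `0 < t < M`. -/
theorem stmt_3 (f finv : ℝ → ℝ) (k : ℕ) (hk : 1 ≤ k)
    (m c₁ c₂ : ℝ) (hm : 1 < m) (hc₁ : 0 < c₁) (hc₁₂ : c₁ < c₂)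
    (ε : ℝ) (hε : 0 < ε)
    (hbound : ∀ x ∈ Set.Icc (0:ℝ) (1 + ε), c₁ * x ^ m ≤ f x ∧ f x ≤ c₂ * x ^ m)
    (hcont : ContinuousOn f (Set.Ici 0))
    (hmono : StrictMonoOn f (Set.Ici 0)) (hf0 : f 0 = 0)
    (hinv : ∀ t ≥ (0:ℝ), 0 ≤ finv t ∧ f (finv t) = t) :
    ∀ M > (0:ℝ), ∃ C > (0:ℝ), ∀ t : ℝ, 0 < t → t < M →
      (∫ r in (0:ℝ)..1, r ^ (k - 1) / (f r + t) ^ k) ≤ C * (finv t) ^ k / t ^ k :=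
  stmt_3_general f finv k hk m c₁ c₂ hm hc₁ hc₁₂ ε hε hbound hcont hf0 hinv
end

section
/- Let f : [0,∞) → [0,∞) be strictly increasing and smooth with f and all its derivatives vanishing at 0, and suppose Λ_f satisfies a doubling condition on [0,R] for some R ∈ (0, f⁻¹(1)) (i.e., f is mildly infinite type at zero). Then for each integer k ≥ 1 and each M > 0 there exists C > 0 such that ∫₀¹ r^{k-1}/(f(r)+t)^k dr ≤ C · [f⁻¹(t)]^k / t^k for all 0 < t < M. -/
/-- `Λ_f(x) = -1/log(f(x))` for `x ≠ 0`, and `Λ_f(0) = 0`. -/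
noncomputable def LambdaF (f : ℝ → ℝ) (x : ℝ) : ℝ :=
  if x = 0 then 0 else -1 / Real.log (f x)

set_option maxHeartbeats 1000000
open Set

lemma aux_quad (f : ℝ → ℝ) (hs : ContDiff ℝ (⊤ : ℕ∞) f) (h0 : f 0 = 0) (h1 : deriv f 0 = 0) :
    ∃ B ≥ (1:ℝ), ∀ x ∈ Set.Icc (0:ℝ) 1, f x ≤ B * x ^ 2 := by
  replace hs : ContDiff ℝ ((⊤:ℕ∞):WithTop ℕ∞) f := hs.of_le (by simp)
  have hd1 : ContDiff ℝ ((⊤:ℕ∞):WithTop ℕ∞) (deriv f) := (contDiff_infty_iff_deriv.mp hs).2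
  have hd2cont : Continuous (deriv (deriv f)) := (contDiff_infty_iff_deriv.mp hd1).2.continuous
  obtain ⟨B0, hB0⟩ := (isCompact_Icc (a := (0:ℝ)) (b := 1)).exists_bound_of_continuousOn
    hd2cont.continuousOn
  refine ⟨max B0 1, le_max_right _ _, ?_⟩
  set B := max B0 1 with hB
  have hBpos : (0:ℝ) < B := lt_of_lt_of_le one_pos (le_max_right _ _)
  intro x hx
  have hd1bd : ∀ y ∈ Set.Icc (0:ℝ) 1, ‖deriv f y - deriv f 0‖ ≤ B * (y - 0) := by
    refine norm_image_sub_le_of_norm_deriv_le_segment'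
      (f' := deriv (deriv f)) (fun z hz => ?_) (fun z hz => ?_)
    · exact ((hd1.differentiable (by simp)) z).hasDerivAt.hasDerivWithinAt
    · exact le_trans (hB0 z ⟨hz.1, hz.2.le⟩) (le_max_left _ _)
  have hfd : ∀ y ∈ Set.Icc (0:ℝ) x, ‖deriv f y‖ ≤ B * x := by
    intro y hy
    have h := hd1bd y ⟨hy.1, hy.2.trans hx.2⟩
    rw [h1, sub_zero, sub_zero] at h
    exact h.trans (by nlinarith [hy.2, hBpos])
  have hfx : ‖f x - f 0‖ ≤ (B * x) * (x - 0) := by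
    refine norm_image_sub_le_of_norm_deriv_le_segment'
      (f' := deriv f) (fun z hz => ?_) (fun z hz => hfd z ⟨hz.1, hz.2.le⟩) x
      ⟨hx.1, le_rfl⟩
    exact ((hs.differentiable (by simp)) z).hasDerivAt.hasDerivWithinAt
  rw [h0, sub_zero, sub_zero] at hfx
  calc f x ≤ |f x| := le_abs_self _
    _ ≤ B * x * x := hfx
    _ = B * x ^ 2 := by ring

lemma aux_sqrt (f : ℝ → ℝ) (hmono : StrictMonoOn f (Set.Ici 0)) (hf0 : f 0 = 0)
    (R σ : ℝ) (hR : 0 < R) (hσ : 1 < σ)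
    (hdbl : ∀ x ∈ Set.Icc 0 (R / σ), 2 * LambdaF f x ≤ LambdaF f (σ * x))
    (δ t : ℝ) (ht : 0 < t) (ht1 : t < 1) (hfδ : f δ = t) (hδpos : 0 < δ)
    (hδR : δ ≤ R / σ ^ 2) :
    Real.sqrt (Real.sqrt t) ≤ f (σ ^ 2 * δ) := by
  have hσ0 : (0:ℝ) < σ := lt_trans one_pos hσ
  have hfpos : ∀ x : ℝ, 0 < x → 0 < f x := fun x hx => by
    have := hmono (le_refl (0:ℝ)) hx.le hx
    rwa [hf0] at this
  have hRσ2 : R / σ ^ 2 ≤ R / σ := by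
    apply div_le_div_of_nonneg_left hR.le hσ0
    nlinarith
  have h1 := hdbl δ ⟨hδpos.le, hδR.trans hRσ2⟩
  have hσδ : σ * δ ≤ R / σ := by
    rw [le_div_iff₀ hσ0]
    rw [le_div_iff₀ (by positivity)] at hδR
    nlinarith
  have h2 := hdbl (σ * δ) ⟨by positivity, hσδ⟩
  have hΛδ : LambdaF f δ = -1 / Real.log t := by
    rw [LambdaF, if_neg hδpos.ne', hfδ]
  have hlt : Real.log t < 0 := Real.log_neg ht ht1
  have hΛδpos : 0 < LambdaF f δ := by
    rw [hΛδ]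
    exact div_pos_of_neg_of_neg (by norm_num) hlt
  have ha : σ * (σ * δ) = σ ^ 2 * δ := by ring
  rw [ha] at h2
  have hapos : 0 < σ ^ 2 * δ := by positivity
  have hΛa : LambdaF f (σ ^ 2 * δ) = -1 / Real.log (f (σ ^ 2 * δ)) := by
    rw [LambdaF, if_neg hapos.ne']
  have hΛa4 : 4 * LambdaF f δ ≤ LambdaF f (σ ^ 2 * δ) := by linarith
  have hΛapos : 0 < -1 / Real.log (f (σ ^ 2 * δ)) := by
    rw [← hΛa]; linarith
  have hlfa : Real.log (f (σ ^ 2 * δ)) < 0 := by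
    by_contra h
    push_neg at h
    have : -1 / Real.log (f (σ ^ 2 * δ)) ≤ 0 :=
      div_nonpos_of_nonpos_of_nonneg (by norm_num) h
    linarith
  have key : Real.log t / 4 ≤ Real.log (f (σ ^ 2 * δ)) := by
    rw [hΛa, hΛδ] at hΛa4
    have hu : 0 < -Real.log (f (σ ^ 2 * δ)) := by linarith
    have hv : 0 < -Real.log t := by linarith
    have h4 : (4:ℝ) / (-Real.log t) ≤ 1 / (-Real.log (f (σ ^ 2 * δ))) := by
      have e1 : -1 / Real.log t = 1 / (-Real.log t) := by ring
      have e2 : -1 / Real.log (f (σ ^ 2 * δ)) = 1 / (-Real.log (f (σ ^ 2 * δ))) := by ring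
      rw [e1, e2] at hΛa4
      calc (4:ℝ) / (-Real.log t) = 4 * (1 / (-Real.log t)) := by ring
        _ ≤ _ := by linarith
    rw [div_le_div_iff₀ hv hu] at h4
    linarith
  have hst : Real.sqrt (Real.sqrt t) = Real.exp (Real.log t / 4) := by
    rw [show Real.log t / 4 = Real.log t / 2 / 2 by ring, ← Real.log_sqrt ht.le,
      ← Real.log_sqrt (Real.sqrt_nonneg t),
      Real.exp_log (Real.sqrt_pos.mpr (Real.sqrt_pos.mpr ht))]
  calc Real.sqrt (Real.sqrt t) = Real.exp (Real.log t / 4) := hst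
    _ ≤ Real.exp (Real.log (f (σ ^ 2 * δ))) := Real.exp_le_exp.mpr key
    _ = f (σ ^ 2 * δ) := Real.exp_log (hfpos _ hapos)

/-- the mildly-infinite-type integral estimate
`∫₀¹ r^{k-1}/(f(r)+t)^k dr ≤ C·[f⁻¹(t)]^k / t^k` for `0 < t < M`. -/
theorem stmt_5 (f finv : ℝ → ℝ)
    (hsmooth : ContDiff ℝ (⊤ : ℕ∞) f)
    (hmono : StrictMonoOn f (Set.Ici 0))
    (hnonneg : ∀ x ≥ (0:ℝ), 0 ≤ f x)
    (hflat : ∀ n : ℕ, iteratedDeriv n f 0 = 0)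
    (R σ : ℝ) (hR : 0 < R) (hR1 : f R < 1) (hσ : 1 < σ)
    (hdbl : ∀ x ∈ Set.Icc 0 (R / σ), 2 * LambdaF f x ≤ LambdaF f (σ * x))
    (hinv : ∀ t ≥ (0:ℝ), 0 ≤ finv t ∧ f (finv t) = t) :
    ∀ k : ℕ, 1 ≤ k → ∀ M > (0:ℝ), ∃ C > (0:ℝ), ∀ t : ℝ, 0 < t → t < M →
      (∫ r in (0:ℝ)..1, r ^ (k - 1) / (f r + t) ^ k) ≤ C * (finv t) ^ k / t ^ k := by
  have hf0 : f 0 = 0 := by simpa using hflat 0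
  have hd0 : deriv f 0 = 0 := by
    have := hflat 1; rwa [iteratedDeriv_one] at this
  obtain ⟨B, hB1, hBq⟩ := aux_quad f hsmooth hf0 hd0
  have hBpos : (0:ℝ) < B := lt_of_lt_of_le one_pos hB1
  have hσ0 : (0:ℝ) < σ := lt_trans one_pos hσ
  have hfpos : ∀ x : ℝ, 0 < x → 0 < f x := fun x hx => by
    have := hmono (le_refl (0:ℝ)) hx.le hx
    rwa [hf0] at this
  have hfcont : Continuous f := hsmooth.continuous
  intro k hk M hM
  have hkpos : (0:ℝ) < (k:ℝ) := by exact_mod_cast hk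
  have hk1 : k - 1 + 1 = k := Nat.succ_pred_eq_of_pos hk
  set m : ℝ := min 1 R / σ ^ 2 with hm_def
  have hmpos : 0 < m := div_pos (lt_min one_pos hR) (by positivity)
  set t₀ : ℝ := min (f m) (1/2) with ht₀_def
  have ht₀pos : 0 < t₀ := lt_min (hfpos m hmpos) (by norm_num)
  obtain ⟨hδ₀nn, hfδ₀⟩ := hinv t₀ ht₀pos.le
  set δ₀ := finv t₀ with hδ₀_def
  have hδ₀pos : 0 < δ₀ := by
    rcases hδ₀nn.lt_or_eq with h | h
    · exact h
    · exfalso; rw [← h, hf0] at hfδ₀; linarith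
  set Cmax : ℝ := max ((σ ^ 2) ^ k + Real.sqrt B ^ k) (1 / δ₀ ^ k) with hCmax_def
  have hCmaxpos : 0 < Cmax := lt_of_lt_of_le (by positivity) (le_max_left _ _)
  refine ⟨Cmax / k, by positivity, ?_⟩
  intro t ht htM
  obtain ⟨hδnn, hfδ⟩ := hinv t ht.le
  set δ := finv t with hδ_def
  have hδpos : 0 < δ := by
    rcases hδnn.lt_or_eq with h | h
    · exact h
    · exfalso; rw [← h, hf0] at hfδ; linarith
  have htk : (0:ℝ) < t ^ k := by positivity
  set g : ℝ → ℝ := fun r => r ^ (k - 1) / (f r + t) ^ k with hg_def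
  have hgcont : ContinuousOn g (Icc 0 1) := by
    apply ContinuousOn.div (by fun_prop) (by fun_prop)
    intro r hr
    have : 0 < f r + t := by have := hnonneg r hr.1; positivity
    positivity
  have hpow_int : ∀ a b c : ℝ, IntervalIntegrable (fun r => r ^ (k-1) / c) MeasureTheory.volume a b := by
    intro a b c
    apply Continuous.intervalIntegrable
    fun_prop
  -- main bound split into the two cases
  have huIcc : uIcc (0:ℝ) 1 = Icc 0 1 := uIcc_of_le (by norm_num)
  have hδδ₀ : t₀ ≤ t → δ₀ ≤ δ := fun h => by
    have : f δ₀ ≤ f δ := by rw [hfδ, hfδ₀]; exact h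
    exact (hmono.le_iff_le hδ₀nn hδnn).mp this
  have main : (∫ r in (0:ℝ)..1, g r) ≤ Cmax / k * δ ^ k / t ^ k := by
    rcases lt_or_ge t t₀ with hlt | hge
    · -- small t
      have ht1 : t < 1 := lt_of_lt_of_le hlt ((min_le_right _ _).trans (by norm_num))
      have hδm : δ < m := by
        have : f δ < f m := by rw [hfδ]; exact lt_of_lt_of_le hlt (min_le_left _ _)
        exact (hmono.lt_iff_lt hδnn hmpos.le).mp this
      set a : ℝ := σ ^ 2 * δ with ha_def
      have hapos : 0 < a := by positivity
      have hσ2m : σ ^ 2 * m = min 1 R := by rw [hm_def]; field_simp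
      have ha1 : a < 1 := by
        calc a < σ ^ 2 * m := by
              exact mul_lt_mul_of_pos_left hδm (by positivity)
          _ = min 1 R := hσ2m
          _ ≤ 1 := min_le_left _ _
      have hδ1 : δ ≤ 1 := by
        have h1' : m ≤ 1 := by
          rw [hm_def, div_le_one (by positivity)]
          calc min 1 R ≤ 1 := min_le_left _ _
            _ ≤ σ ^ 2 := by nlinarith
        exact hδm.le.trans h1'
      have hδR2 : δ ≤ R / σ ^ 2 := by
        have hmR : m ≤ R / σ ^ 2 := by
          rw [hm_def]
          gcongr
          exact min_le_right _ _
        exact hδm.le.trans hmR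
      have hfa : Real.sqrt (Real.sqrt t) ≤ f a :=
        aux_sqrt f hmono hf0 R σ hR hσ hdbl δ t ht ht1 hfδ hδpos hδR2
      set s : ℝ := Real.sqrt (Real.sqrt t) with hs_def
      have hspos : 0 < s := Real.sqrt_pos.mpr (Real.sqrt_pos.mpr ht)
      have hint1 : IntervalIntegrable g MeasureTheory.volume 0 a :=
        (hgcont.mono (by rw [uIcc_of_le hapos.le]; exact Icc_subset_Icc le_rfl ha1.le)).intervalIntegrable
      have hint2 : IntervalIntegrable g MeasureTheory.volume a 1 :=
        (hgcont.mono (by rw [uIcc_of_le ha1.le]; exact Icc_subset_Icc hapos.le le_rfl)).intervalIntegrable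
      rw [← intervalIntegral.integral_add_adjacent_intervals hint1 hint2]
      have hb1 : (∫ r in (0:ℝ)..a, g r) ≤ a ^ k / k / t ^ k := by
        have hpt : ∀ r ∈ Icc (0:ℝ) a, g r ≤ r ^ (k-1) / t ^ k := by
          intro r hr
          have hfr : 0 ≤ f r := hnonneg r hr.1
          have h2 : t ^ k ≤ (f r + t) ^ k := pow_le_pow_left₀ ht.le (by linarith) k
          exact div_le_div_of_nonneg_left (pow_nonneg hr.1 _) (by positivity) h2
        calc (∫ r in (0:ℝ)..a, g r) ≤ ∫ r in (0:ℝ)..a, r ^ (k-1) / t ^ k :=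
              intervalIntegral.integral_mono_on hapos.le hint1 (hpow_int 0 a _) hpt
          _ = a ^ k / k / t ^ k := by
              rw [intervalIntegral.integral_div, integral_pow, hk1]
              have : ((k - 1 : ℕ) : ℝ) + 1 = (k : ℝ) := by exact_mod_cast congrArg (Nat.cast (R := ℝ)) hk1
              rw [this]
              rw [zero_pow (by omega)]
              ring
      have hb2 : (∫ r in a..(1:ℝ), g r) ≤ 1 / k / s ^ k := by
        have hpt : ∀ r ∈ Icc a (1:ℝ), g r ≤ r ^ (k-1) / s ^ k := by
          intro r hr
          have hra : a ≤ r := hr.1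
          have hfr : s ≤ f r := by
            refine hfa.trans ?_
            rcases eq_or_lt_of_le hra with h | h
            · rw [h]
            · exact (hmono hapos.le ((hapos.le).trans hra) h).le
          have h2 : s ^ k ≤ (f r + t) ^ k := pow_le_pow_left₀ hspos.le (by linarith) k
          exact div_le_div_of_nonneg_left (pow_nonneg (hapos.le.trans hr.1) _) (by positivity) h2
        calc (∫ r in a..(1:ℝ), g r) ≤ ∫ r in a..(1:ℝ), r ^ (k-1) / s ^ k :=
              intervalIntegral.integral_mono_on ha1.le hint2 (hpow_int a 1 _) hpt
          _ = (1 - a ^ k) / k / s ^ k := by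
              rw [intervalIntegral.integral_div, integral_pow, hk1]
              have : ((k - 1 : ℕ) : ℝ) + 1 = (k : ℝ) := by exact_mod_cast congrArg (Nat.cast (R := ℝ)) hk1
              rw [this, one_pow]
          _ ≤ 1 / k / s ^ k := by
              gcongr
              nlinarith [pow_nonneg hapos.le k]
      have hquad : t ≤ B * δ ^ 2 := by rw [← hfδ]; exact hBq δ ⟨hδnn, hδ1⟩
      have hsqt : Real.sqrt t ≤ Real.sqrt B * δ := by
        calc Real.sqrt t ≤ Real.sqrt (B * δ ^ 2) := Real.sqrt_le_sqrt hquad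
          _ = Real.sqrt B * δ := by
              rw [Real.sqrt_mul hBpos.le, Real.sqrt_sq hδnn]
      have hT : t ≤ Real.sqrt B * δ * s := by
        have e1 : Real.sqrt t * Real.sqrt t = t := Real.mul_self_sqrt ht.le
        have e2 : s * s = Real.sqrt t := Real.mul_self_sqrt (Real.sqrt_nonneg t)
        have e3 : s ≤ 1 := Real.sqrt_le_one.mpr (Real.sqrt_le_one.mpr ht1.le)
        have h5 : Real.sqrt t ≤ s := by
          calc Real.sqrt t = s * s := e2.symm
            _ ≤ 1 * s := mul_le_mul_of_nonneg_right e3 hspos.le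
            _ = s := one_mul s
        calc t = Real.sqrt t * Real.sqrt t := e1.symm
          _ ≤ (Real.sqrt B * δ) * s :=
              mul_le_mul hsqt h5 (Real.sqrt_nonneg t) (by positivity)
      have hb2' : (1:ℝ) / k / s ^ k ≤ Real.sqrt B ^ k * δ ^ k / k / t ^ k := by
        rw [div_le_div_iff₀ (by positivity) (by positivity)]
        have hTk : t ^ k ≤ (Real.sqrt B * δ * s) ^ k := pow_le_pow_left₀ ht.le hT k
        calc 1 / (k:ℝ) * t ^ k ≤ 1 / (k:ℝ) * (Real.sqrt B * δ * s) ^ k := by gcongr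
          _ = Real.sqrt B ^ k * δ ^ k / k * s ^ k := by rw [mul_pow, mul_pow]; ring
      calc (∫ r in (0:ℝ)..a, g r) + (∫ r in a..(1:ℝ), g r)
          ≤ a ^ k / k / t ^ k + 1 / k / s ^ k := add_le_add hb1 hb2
        _ ≤ a ^ k / k / t ^ k + Real.sqrt B ^ k * δ ^ k / k / t ^ k := by linarith
        _ = ((σ ^ 2) ^ k + Real.sqrt B ^ k) * δ ^ k / k / t ^ k := by
            rw [ha_def, mul_pow]; ring
        _ ≤ Cmax * δ ^ k / k / t ^ k := by
            gcongr
            exact le_max_left _ _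
        _ = Cmax / k * δ ^ k / t ^ k := by ring
    · -- large t
      have hpt : ∀ r ∈ Icc (0:ℝ) 1, g r ≤ r ^ (k-1) / t ^ k := by
        intro r hr
        have hfr : 0 ≤ f r := hnonneg r hr.1
        have h2 : t ^ k ≤ (f r + t) ^ k := pow_le_pow_left₀ ht.le (by linarith) k
        exact div_le_div_of_nonneg_left (pow_nonneg hr.1 _) (by positivity) h2
      have hgint01 : IntervalIntegrable g MeasureTheory.volume 0 1 :=
        (hgcont.mono huIcc.le).intervalIntegrable
      have hval : (∫ r in (0:ℝ)..1, r ^ (k-1) / t ^ k) = 1 / k / t ^ k := by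
        rw [intervalIntegral.integral_div, integral_pow, hk1]
        have : ((k - 1 : ℕ) : ℝ) + 1 = (k : ℝ) := by exact_mod_cast congrArg (Nat.cast (R := ℝ)) hk1
        rw [this, one_pow, zero_pow (by omega)]
        ring
      have hδ' : δ₀ ≤ δ := hδδ₀ hge
      have h1 : (1:ℝ) ≤ Cmax * δ ^ k := by
        have h2 : 1 / δ₀ ^ k ≤ Cmax := le_max_right _ _
        have h3 : δ₀ ^ k ≤ δ ^ k := pow_le_pow_left₀ hδ₀nn hδ' k
        calc (1:ℝ) = 1 / δ₀ ^ k * δ₀ ^ k := by field_simp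
          _ ≤ Cmax * δ ^ k := mul_le_mul h2 h3 (by positivity) hCmaxpos.le
      calc (∫ r in (0:ℝ)..1, g r) ≤ ∫ r in (0:ℝ)..1, r ^ (k-1) / t ^ k :=
            intervalIntegral.integral_mono_on (by norm_num) hgint01 (hpow_int 0 1 _) hpt
        _ = 1 / k / t ^ k := hval
        _ ≤ Cmax / k * δ ^ k / t ^ k := by
            have e : Cmax / k * δ ^ k / t ^ k = (Cmax * δ ^ k) / k / t ^ k := by ring
            rw [e]
            gcongr
  exact main
end

section
/- Let f be mildly infinite type at zero. Then for each k ≥ 1 there exists t₀ > 0 and C > 0 such that ∫_{f⁻¹(t)}^{f⁻¹(√t)} r^{k-1}/(f(r)+t)^k dr ≤ C · [f⁻¹(t)]^k / t^k for all 0 < t < t₀. -/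
/-- the middle piece `II` of the integral estimate for a mildly infinite
type function: `∫_{f⁻¹(t)}^{f⁻¹(√t)} r^{k-1}/(f(r)+t)^k dr ≤ C·[f⁻¹(t)]^k / t^k`. -/
theorem stmt_6 (f finv : ℝ → ℝ)
    (hsmooth : ContDiff ℝ (⊤ : ℕ∞) f)
    (hmono : StrictMonoOn f (Set.Ici 0))
    (hnonneg : ∀ x ≥ (0:ℝ), 0 ≤ f x)
    (hflat : ∀ n : ℕ, iteratedDeriv n f 0 = 0)
    (R σ : ℝ) (hR : 0 < R) (hR1 : f R < 1) (hσ : 1 < σ)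
    (hdbl : ∀ x ∈ Set.Icc 0 (R / σ), 2 * LambdaF f x ≤ LambdaF f (σ * x))
    (hinv : ∀ t ≥ (0:ℝ), 0 ≤ finv t ∧ f (finv t) = t) :
    ∀ k : ℕ, 1 ≤ k → ∃ t₀ > (0:ℝ), ∃ C > (0:ℝ), ∀ t : ℝ, 0 < t → t < t₀ →
      (∫ r in (finv t)..(finv (Real.sqrt t)), r ^ (k - 1) / (f r + t) ^ k)
        ≤ C * (finv t) ^ k / t ^ k := by
  intro k hk
  have hf0 : f 0 = 0 := by simpa using hflat 0
  have hσ0 : (0:ℝ) < σ := lt_trans one_pos hσ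
  have hRσ : 0 < R / σ := div_pos hR hσ0
  have hfRσ : 0 < f (R / σ) := by
    have := hmono (Set.self_mem_Ici) (Set.mem_Ici.2 hRσ.le) hRσ
    simpa [hf0] using this
  -- strict monotonicity transfer
  have key : ∀ x y : ℝ, 0 ≤ x → 0 ≤ y → f x < f y → x < y := by
    intro x y hx hy hxy
    by_contra h
    push_neg at h
    rcases h.lt_or_eq with h | h
    · exact absurd (hmono hy hx h) (by linarith)
    · rw [h] at hxy; exact lt_irrefl _ hxy
  refine ⟨min (f (R/σ)) 1, lt_min hfRσ one_pos, σ ^ k, pow_pos hσ0 k, ?_⟩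
  intro t ht ht0
  have ht1 : t < 1 := ht0.trans_le (min_le_right _ _)
  have htR : t < f (R/σ) := ht0.trans_le (min_le_left _ _)
  obtain ⟨ha0, hfa⟩ := hinv t ht.le
  have hsq : 0 < Real.sqrt t := Real.sqrt_pos.2 ht
  obtain ⟨hb0, hfb⟩ := hinv (Real.sqrt t) hsq.le
  set a := finv t with ha
  set b := finv (Real.sqrt t) with hb
  have hapos : 0 < a := key 0 a le_rfl ha0 (by rw [hf0, hfa]; exact ht)
  have haRσ : a < R / σ := key a (R/σ) ha0 hRσ.le (by rw [hfa]; exact htR)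
  have htsq : t ≤ Real.sqrt t := by
    nlinarith [Real.sq_sqrt ht.le, Real.sqrt_nonneg t]
  have hab : a ≤ b := by
    by_contra h
    push_neg at h
    have := hmono hb0 ha0 h
    rw [hfa, hfb] at this
    linarith
  have hsq1 : Real.sqrt t < 1 := by
    rw [show (1:ℝ) = Real.sqrt 1 by simp]
    exact Real.sqrt_lt_sqrt ht.le ht1
  have hlogt : Real.log t < 0 := Real.log_neg ht ht1
  -- key step: b ≤ σ * a  via doubling
  have hbσa : b ≤ σ * a := by
    by_contra h
    push_neg at h
    have hσapos : 0 < σ * a := mul_pos hσ0 hapos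
    have hfσa : f (σ * a) < Real.sqrt t := by
      have := hmono (Set.mem_Ici.2 hσapos.le) (Set.mem_Ici.2 hb0) h
      rwa [hfb] at this
    have hfσapos : 0 < f (σ * a) := by
      have := hmono Set.self_mem_Ici (Set.mem_Ici.2 hσapos.le) hσapos
      rwa [hf0] at this
    have hdb := hdbl a ⟨ha0, haRσ.le⟩
    rw [LambdaF, LambdaF, if_neg hapos.ne', if_neg hσapos.ne', hfa] at hdb
    have hlsqt : Real.log (Real.sqrt t) < 0 := Real.log_neg hsq hsq1
    have hll : Real.log (f (σ * a)) < Real.log (Real.sqrt t) :=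
      Real.log_lt_log hfσapos hfσa
    -- -1/log f(σa) < -1/log √t
    have h1 : (1:ℝ) / (-Real.log (f (σ * a))) < 1 / (-Real.log (Real.sqrt t)) :=
      one_div_lt_one_div_of_lt (by linarith) (by linarith)
    have e1 : (1:ℝ) / (-Real.log (f (σ * a))) = -1 / Real.log (f (σ * a)) := by
      rw [div_neg, neg_div, one_div]
    have e2 : (1:ℝ) / (-Real.log (Real.sqrt t)) = -1 / Real.log (Real.sqrt t) := by
      rw [div_neg, neg_div, one_div]
    rw [e1, e2] at h1
    have e3 : -1 / Real.log (Real.sqrt t) = 2 * (-1 / Real.log t) := by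
      rw [Real.log_sqrt ht.le]
      field_simp
    rw [e3] at h1
    linarith
  -- now the integral estimate
  have hcont : ContinuousOn (fun r => r ^ (k-1) / (f r + t) ^ k) (Set.uIcc a b) := by
    rw [Set.uIcc_of_le hab]
    apply ContinuousOn.div
    · exact (continuous_pow _).continuousOn
    · exact ((hsmooth.continuous.add continuous_const).pow k).continuousOn
    · intro r hr
      have hr0 : 0 ≤ r := ha0.trans hr.1
      have : 0 < f r + t := by
        have := hnonneg r hr0
        linarith
      exact (pow_pos this k).ne'
  have hint : IntervalIntegrable (fun r => r ^ (k-1) / (f r + t) ^ k)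
      MeasureTheory.volume a b := hcont.intervalIntegrable
  have hle : ∀ r ∈ Set.Icc a b,
      r ^ (k-1) / (f r + t) ^ k ≤ (σ * a) ^ (k-1) / t ^ k := by
    intro r hr
    have hr0 : 0 ≤ r := ha0.trans hr.1
    have hfr : 0 ≤ f r := hnonneg r hr0
    have hrσa : r ≤ σ * a := hr.2.trans hbσa
    apply div_le_div₀ (by positivity) (pow_le_pow_left₀ hr0 hrσa _)
      (pow_pos ht k) (pow_le_pow_left₀ ht.le (by linarith) _)
  have hmain := intervalIntegral.integral_mono_on hab hint
    (intervalIntegrable_const) hle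
  rw [intervalIntegral.integral_const] at hmain
  have hfac : (0:ℝ) ≤ (σ * a) ^ (k-1) / t ^ k := by positivity
  have hba : b - a ≤ σ * a := by nlinarith
  have step : (b - a) • ((σ * a) ^ (k-1) / t ^ k) ≤ (σ * a) * ((σ * a) ^ (k-1) / t ^ k) := by
    rw [smul_eq_mul]
    exact mul_le_mul_of_nonneg_right hba hfac
  have hk' : k - 1 + 1 = k := Nat.succ_pred_eq_of_pos hk
  have eq1 : (σ * a) * ((σ * a) ^ (k-1) / t ^ k) = σ ^ k * a ^ k / t ^ k := by
    rw [mul_div_assoc', ← pow_succ', hk', mul_pow]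
  calc (∫ r in a..b, r ^ (k-1) / (f r + t) ^ k)
      ≤ (b - a) • ((σ * a) ^ (k-1) / t ^ k) := hmain
    _ ≤ (σ * a) * ((σ * a) ^ (k-1) / t ^ k) := step
    _ = σ ^ k * a ^ k / t ^ k := eq1
end

section
/- Let f be mildly infinite type at zero and k ≥ 1. Then ∫_{f⁻¹(√t)}^{1} r^{k-1}/(f(r)+t)^k dr ≤ t^{1/2}/(k t^k) for all t ∈ (0, min{f(R/σ), f(1)²}), and consequently there exists C(k,f) > 0 with this integral bounded by C(k,f)·[f⁻¹(t)]^k/t^k for such t. -/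
private lemma itDW_eq_itD (f : ℝ → ℝ) (hf : ContDiff ℝ (⊤ : ℕ∞) f) {s : Set ℝ}
    (hs : UniqueDiffOn ℝ s) {x : ℝ} (hx : x ∈ s) (n : ℕ) :
    iteratedDerivWithin n f s x = iteratedDeriv n f x := by
  have H0 := (hf.of_le (WithTop.coe_le_coe.mpr (le_top : (n : ℕ∞) ≤ ⊤))).contDiffOn.ftaylorSeriesWithin
    uniqueDiffOn_univ
  rw [ftaylorSeriesWithin_univ] at H0
  have H := (H0.mono (Set.subset_univ s)).eq_iteratedFDerivWithin_of_uniqueDiffOn le_rfl hs hx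
  rw [iteratedDerivWithin, iteratedDeriv, ← H]
  rfl

private lemma flat_bound (f : ℝ → ℝ) (hsmooth : ContDiff ℝ (⊤ : ℕ∞) f)
    (hflat : ∀ n : ℕ, iteratedDeriv n f 0 = 0) (m : ℕ) (hm : 1 ≤ m) :
    ∃ M > (0:ℝ), ∀ x ∈ Set.Icc (0:ℝ) 1, f x ≤ M * x ^ m := by
  obtain ⟨c, hc, hcmax⟩ := isCompact_Icc.exists_isMaxOn (⟨0, by norm_num⟩ :
      (Set.Icc (0:ℝ) 1).Nonempty)
    ((hsmooth.continuous_iteratedDeriv m (by exact_mod_cast le_top)).abs.continuousOn)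
  refine ⟨|iteratedDeriv m f c| + 1, by positivity, ?_⟩
  intro x hx
  rcases eq_or_lt_of_le hx.1 with h0 | h0
  · have hf0 : f 0 = 0 := by simpa using hflat 0
    rw [← h0, hf0, zero_pow (by omega), mul_zero]
  · -- 0 < x, use Taylor with Lagrange remainder
    have husd : UniqueDiffOn ℝ (Set.Icc 0 x) := uniqueDiffOn_Icc h0
    have hcd : ContDiffOn ℝ (m - 1 : ℕ) f (Set.Icc 0 x) :=
      (hsmooth.of_le (WithTop.coe_le_coe.mpr (le_top : ((m - 1 : ℕ) : ℕ∞) ≤ ⊤))).contDiffOn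
    have hdiff : DifferentiableOn ℝ (iteratedDerivWithin (m - 1) f (Set.Icc 0 x))
        (Set.Ioo 0 x) := by
      apply DifferentiableOn.congr
        ((hsmooth.differentiable_iteratedDeriv (m - 1) (WithTop.coe_lt_coe.mpr (ENat.coe_lt_top (m - 1)))).differentiableOn)
      intro y hy
      exact itDW_eq_itD f hsmooth husd (Set.Ioo_subset_Icc_self hy) (m - 1)
    obtain ⟨x', hx', heq⟩ := taylor_mean_remainder_lagrange h0.ne
      (by rw [Set.uIcc_of_le h0.le]; exact hcd)
      (by rw [Set.uIcc_of_le h0.le, Set.uIoo_of_le h0.le]; exact hdiff)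
    rw [Set.uIcc_of_le h0.le] at heq
    rw [Set.uIoo_of_le h0.le] at hx'
    have hT : taylorWithinEval f (m - 1) (Set.Icc 0 x) 0 x = 0 := by
      rw [taylor_within_apply]
      apply Finset.sum_eq_zero
      intro i _
      rw [itDW_eq_itD f hsmooth husd (Set.left_mem_Icc.mpr h0.le) i, hflat i, smul_zero]
    rw [hT, sub_zero, sub_zero, Nat.sub_add_cancel hm,
      itDW_eq_itD f hsmooth husd (Set.Ioo_subset_Icc_self hx') m] at heq
    have hx'1 : x' ∈ Set.Icc (0:ℝ) 1 := ⟨hx'.1.le, hx'.2.le.trans hx.2⟩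
    have hb : |iteratedDeriv m f x'| ≤ |iteratedDeriv m f c| + 1 :=
      (hcmax hx'1).trans (by linarith)
    have hfac : (1:ℝ) ≤ (m.factorial : ℝ) := by
      exact_mod_cast Nat.one_le_iff_ne_zero.mpr m.factorial_ne_zero
    calc f x = iteratedDeriv m f x' * x ^ m / (m.factorial : ℝ) := heq
      _ ≤ |iteratedDeriv m f x' * x ^ m / (m.factorial : ℝ)| := le_abs_self _
      _ = |iteratedDeriv m f x'| * x ^ m / (m.factorial : ℝ) := by
          rw [abs_div, abs_mul, abs_pow, abs_of_nonneg h0.le, Nat.abs_cast]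
      _ ≤ |iteratedDeriv m f x'| * x ^ m := div_le_self (by positivity) hfac
      _ ≤ (|iteratedDeriv m f c| + 1) * x ^ m :=
          mul_le_mul_of_nonneg_right hb (by positivity)

/-- the tail piece `III`: for `0 < t < min{f(R/σ), f(1)²}`,
`∫_{f⁻¹(√t)}^1 r^{k-1}/(f(r)+t)^k dr ≤ √t/(k·t^k)`, and consequently it is bounded by
`C·[f⁻¹(t)]^k/t^k`. -/
theorem stmt_7 (f finv : ℝ → ℝ)
    (hsmooth : ContDiff ℝ (⊤ : ℕ∞) f)
    (hmono : StrictMonoOn f (Set.Ici 0))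
    (hnonneg : ∀ x ≥ (0:ℝ), 0 ≤ f x)
    (hflat : ∀ n : ℕ, iteratedDeriv n f 0 = 0)
    (R σ : ℝ) (hR : 0 < R) (hR1 : f R < 1) (hσ : 1 < σ)
    (hdbl : ∀ x ∈ Set.Icc 0 (R / σ), 2 * LambdaF f x ≤ LambdaF f (σ * x))
    (hinv : ∀ t ≥ (0:ℝ), 0 ≤ finv t ∧ f (finv t) = t)
    (k : ℕ) (hk : 1 ≤ k) :
    (∀ t : ℝ, 0 < t → t < min (f (R / σ)) ((f 1) ^ 2) →
      (∫ r in (finv (Real.sqrt t))..1, r ^ (k - 1) / (f r + t) ^ k)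
        ≤ Real.sqrt t / (k * t ^ k)) ∧
    ∃ C > (0:ℝ), ∀ t : ℝ, 0 < t → t < min (f (R / σ)) ((f 1) ^ 2) →
      (∫ r in (finv (Real.sqrt t))..1, r ^ (k - 1) / (f r + t) ^ k)
        ≤ C * (finv t) ^ k / t ^ k := by
  have hσ0 : (0:ℝ) < σ := lt_trans one_pos hσ
  have hRσ : 0 < R / σ := div_pos hR hσ0
  have hfRσ : f (R / σ) < 1 :=
    lt_trans (hmono hRσ.le hR.le (div_lt_self hR hσ)) hR1
  have hkk : k - 1 + 1 = k := Nat.succ_pred_eq_of_pos hk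
  -- part 1
  have part1 : ∀ t : ℝ, 0 < t → t < min (f (R / σ)) ((f 1) ^ 2) →
      (∫ r in (finv (Real.sqrt t))..1, r ^ (k - 1) / (f r + t) ^ k)
        ≤ Real.sqrt t / (k * t ^ k) := by
    intro t ht htlt
    have ht1 : t < 1 := lt_trans (lt_of_lt_of_le htlt (min_le_left _ _)) hfRσ
    have htf1 : t < (f 1) ^ 2 := lt_of_lt_of_le htlt (min_le_right _ _)
    have hf1 : 0 < f 1 := by
      rcases (hnonneg 1 zero_le_one).lt_or_eq with h | h
      · exact h
      · exfalso; rw [← h] at htf1; simp at htf1; linarith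
    set s := Real.sqrt t with hs_def
    have hs0 : 0 < s := Real.sqrt_pos.mpr ht
    have hs2 : s ^ 2 = t := Real.sq_sqrt ht.le
    have hsf1 : s < f 1 := by
      have := Real.sqrt_lt_sqrt ht.le htf1
      rwa [Real.sqrt_sq hf1.le] at this
    obtain ⟨ha0, hfa⟩ := hinv s hs0.le
    set a := finv s with ha_def
    have ha1 : a < 1 := by
      by_contra hcon
      push_neg at hcon
      have : f 1 ≤ f a := hmono.monotoneOn (Set.mem_Ici.mpr zero_le_one)
        (Set.mem_Ici.mpr ha0) hcon
      rw [hfa] at this; linarith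
    have hdenpos : 0 < s * t ^ (k - 1) := by positivity
    -- pointwise bound
    have key : ∀ r ∈ Set.Icc a 1,
        r ^ (k - 1) / (f r + t) ^ k ≤ r ^ (k - 1) / (s * t ^ (k - 1)) := by
      intro r hr
      have hr0 : 0 ≤ r := ha0.trans hr.1
      have hfr : s ≤ f r := by
        rw [← hfa]
        exact hmono.monotoneOn (Set.mem_Ici.mpr ha0) (Set.mem_Ici.mpr hr0) hr.1
      have h1 : s ≤ f r + t := hfr.trans (le_add_of_nonneg_right ht.le)
      have h2 : t ^ (k - 1) ≤ (f r + t) ^ (k - 1) :=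
        pow_le_pow_left₀ ht.le (le_add_of_nonneg_left (hnonneg r hr0)) _
      have hle : s * t ^ (k - 1) ≤ (f r + t) ^ k := by
        calc s * t ^ (k - 1) ≤ (f r + t) * (f r + t) ^ (k - 1) :=
              mul_le_mul h1 h2 (by positivity) (by linarith)
          _ = (f r + t) ^ k := by rw [← pow_succ', hkk]
      gcongr

    -- integrability
    have hfrpos : ∀ r ∈ Set.Icc a 1, (0:ℝ) < (f r + t) ^ k := by
      intro r hr
      have : 0 ≤ f r := hnonneg r (ha0.trans hr.1)
      positivity
    have hcont : Continuous f := hsmooth.continuous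
    have hint1 : IntervalIntegrable (fun r => r ^ (k - 1) / (f r + t) ^ k)
        MeasureTheory.volume a 1 := by
      apply ContinuousOn.intervalIntegrable
      rw [Set.uIcc_of_le ha1.le]
      apply ContinuousOn.div
      · exact (continuous_pow (k - 1)).continuousOn
      · exact ((hcont.continuousOn.add continuousOn_const).pow k)
      · intro r hr; exact (hfrpos r hr).ne'
    have hint2 : IntervalIntegrable (fun r => r ^ (k - 1) / (s * t ^ (k - 1)))
        MeasureTheory.volume a 1 :=
      ((continuous_pow (k - 1)).div_const _).intervalIntegrable a 1
    have hmono_int := intervalIntegral.integral_mono_on ha1.le hint1 hint2 key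
    -- compute the right-hand integral
    have hkkR : ((k - 1 : ℕ) : ℝ) + 1 = (k : ℝ) := by exact_mod_cast hkk
    have hcalc : (∫ r in a..1, r ^ (k - 1) / (s * t ^ (k - 1)))
        = ((1 - a ^ k) / k) / (s * t ^ (k - 1)) := by
      rw [intervalIntegral.integral_div, integral_pow, hkk, one_pow, hkkR]
    have hbound : ((1 - a ^ k) / k) / (s * t ^ (k - 1)) ≤ s / (k * t ^ k) := by
      have hak : 0 ≤ a ^ k := pow_nonneg ha0 k
      have hk0 : (0:ℝ) < k := by exact_mod_cast hk
      have htk : t ^ k = s ^ 2 * t ^ (k - 1) := by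
        rw [hs2, ← pow_succ', hkk]
      rw [htk, div_le_div_iff₀ (by positivity) (by positivity)]
      have h1a : (1 - a ^ k) / k ≤ 1 / k := by gcongr; linarith
      calc (1 - a ^ k) / k * (k * (s ^ 2 * t ^ (k - 1)))
          ≤ 1 / k * (k * (s ^ 2 * t ^ (k - 1))) :=
            mul_le_mul_of_nonneg_right h1a (by positivity)
        _ = s * (s * t ^ (k - 1)) := by field_simp
    calc (∫ r in a..1, r ^ (k - 1) / (f r + t) ^ k)
        ≤ (∫ r in a..1, r ^ (k - 1) / (s * t ^ (k - 1))) := hmono_int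
      _ = ((1 - a ^ k) / k) / (s * t ^ (k - 1)) := hcalc
      _ ≤ s / (k * t ^ k) := hbound
  refine ⟨part1, ?_⟩
  -- part 2
  obtain ⟨M, hM, hMb⟩ := flat_bound f hsmooth hflat (2 * k) (by omega)
  refine ⟨Real.sqrt M + 1, by positivity, ?_⟩
  intro t ht htlt
  have ht1 : t < 1 := lt_trans (lt_of_lt_of_le htlt (min_le_left _ _)) hfRσ
  have htf1 : t < (f 1) ^ 2 := lt_of_lt_of_le htlt (min_le_right _ _)
  have hf1 : 0 < f 1 := by
    rcases (hnonneg 1 zero_le_one).lt_or_eq with h | h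
    · exact h
    · exfalso; rw [← h] at htf1; simp at htf1; linarith
  have hsf1 : Real.sqrt t < f 1 := by
    have := Real.sqrt_lt_sqrt ht.le htf1
    rwa [Real.sqrt_sq hf1.le] at this
  have hts : t ≤ Real.sqrt t := by
    have h1 : Real.sqrt t ≤ 1 := Real.sqrt_le_one.mpr ht1.le
    nlinarith [Real.sq_sqrt ht.le, Real.sqrt_nonneg t]
  have htlt1 : t < f 1 := lt_of_le_of_lt hts hsf1
  obtain ⟨hb0, hfb⟩ := hinv t ht.le
  set b := finv t with hb_def
  have hb1 : b < 1 := by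
    by_contra hcon
    push_neg at hcon
    have : f 1 ≤ f b := hmono.monotoneOn (Set.mem_Ici.mpr zero_le_one)
      (Set.mem_Ici.mpr hb0) hcon
    rw [hfb] at this; linarith
  have htM : t ≤ M * b ^ (2 * k) := by
    rw [← hfb]; exact hMb b ⟨hb0, hb1.le⟩
  have hsb : Real.sqrt t ≤ Real.sqrt M * b ^ k := by
    calc Real.sqrt t ≤ Real.sqrt (M * b ^ (2 * k)) := Real.sqrt_le_sqrt htM
      _ = Real.sqrt M * b ^ k := by
        rw [Real.sqrt_mul hM.le, show (2 * k) = k * 2 by ring, pow_mul,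
          Real.sqrt_sq (pow_nonneg hb0 k)]
  have hkk1 : (1:ℝ) ≤ (k : ℝ) := by exact_mod_cast hk
  have hfinal : Real.sqrt t / (k * t ^ k) ≤ (Real.sqrt M + 1) * b ^ k / t ^ k := by
    rw [div_le_div_iff₀ (by positivity) (by positivity)]
    have h1 : Real.sqrt t ≤ (Real.sqrt M + 1) * b ^ k := by
      nlinarith [pow_nonneg hb0 k]
    have htkpos : (0:ℝ) < t ^ k := pow_pos ht k
    nlinarith [mul_le_mul_of_nonneg_right h1 htkpos.le,
      mul_nonneg (mul_nonneg (by positivity : (0:ℝ) ≤ Real.sqrt M + 1) (pow_nonneg hb0 k))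
        htkpos.le]
  exact (part1 t ht htlt).trans hfinal
end

section
/- Let f : [0,∞) → [0,∞) be finite type at zero. Then for any constant a > 1 there exists C > 0 such that f⁻¹(t) ≤ C·f⁻¹(t/a) for all t ∈ (0,1). -/
/-- if `f` is finite type at zero, then for every `a > 1` there is `C > 0`
with `f⁻¹(t) ≤ C·f⁻¹(t/a)` for all `t ∈ (0,1)`. -/
theorem stmt_9 (f finv : ℝ → ℝ)
    (hcont : ContinuousOn f (Set.Ici 0))
    (hmono : StrictMonoOn f (Set.Ici 0))
    (hnonneg : ∀ x ≥ (0:ℝ), 0 ≤ f x) (hf0 : f 0 = 0)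
    (m c : ℝ) (hm : 1 < m) (hc : 0 < c)
    (hlim : Filter.Tendsto (fun x => f x / x ^ m) (nhdsWithin 0 (Set.Ioi 0)) (nhds c))
    (hinv : ∀ t ≥ (0:ℝ), 0 ≤ finv t ∧ f (finv t) = t) :
    ∀ a > (1:ℝ), ∃ C > (0:ℝ), ∀ t ∈ Set.Ioo (0:ℝ) 1, finv t ≤ C * finv (t / a) := by
  intro a ha
  have hapos : (0:ℝ) < a := lt_trans one_pos ha
  have hmpos : (0:ℝ) < m := lt_trans one_pos hm
  -- monotonicity of finv
  have hfinv_mono : ∀ s t : ℝ, 0 ≤ s → s ≤ t → finv s ≤ finv t := by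
    intro s t hs hst
    obtain ⟨hs0, hfs⟩ := hinv s hs
    obtain ⟨ht0, hft⟩ := hinv t (le_trans hs hst)
    have := (hmono.le_iff_le (Set.mem_Ici.2 hs0) (Set.mem_Ici.2 ht0)).1
      (by rw [hfs, hft]; exact hst)
    exact this
  have hfinv_pos : ∀ t : ℝ, 0 < t → 0 < finv t := by
    intro t ht
    obtain ⟨ht0, hft⟩ := hinv t ht.le
    rcases ht0.eq_or_lt with h | h
    · exfalso; rw [← h, hf0] at hft; linarith
    · exact h
  set ε := c * (a - 1) / (a + 1) with hε
  have hεpos : 0 < ε := div_pos (mul_pos hc (by linarith)) (by linarith)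
  have hεc : ε < c := by
    rw [hε, div_lt_iff₀ (by linarith : (0:ℝ) < a + 1)]
    nlinarith
  obtain ⟨δ, hδpos, hδball⟩ := (Metric.tendsto_nhdsWithin_nhds.1 hlim) ε hεpos
  set C1 := a ^ (2 / m) with hC1
  have hC1gt : 1 < C1 := by
    rw [hC1]
    exact (Real.one_lt_rpow_iff_of_pos hapos).2 (Or.inl ⟨ha, by positivity⟩)
  have hC1pos : 0 < C1 := lt_trans one_pos hC1gt
  have hC1m : C1 ^ m = a * a := by
    rw [hC1, ← Real.rpow_mul hapos.le, div_mul_cancel₀ _ (ne_of_gt hmpos),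
      Real.rpow_two, sq]
  -- bounds from the limit
  have hbound : ∀ x : ℝ, 0 < x → x < δ →
      (c - ε) * x ^ m ≤ f x ∧ f x ≤ (c + ε) * x ^ m := by
    intro x hx hxδ
    have hd := hδball (Set.mem_Ioi.2 hx) (by simpa [Real.dist_eq, abs_of_pos hx] using hxδ)
    rw [Real.dist_eq, abs_lt] at hd
    have hxm : (0:ℝ) < x ^ m := Real.rpow_pos_of_pos hx m
    constructor
    · have : c - ε ≤ f x / x ^ m := by linarith [hd.1]
      calc (c - ε) * x ^ m ≤ (f x / x ^ m) * x ^ m := by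
            exact mul_le_mul_of_nonneg_right this hxm.le
        _ = f x := by field_simp
    · have : f x / x ^ m ≤ c + ε := by linarith [hd.2]
      calc f x = (f x / x ^ m) * x ^ m := by field_simp
        _ ≤ (c + ε) * x ^ m := mul_le_mul_of_nonneg_right this hxm.le
  -- key: for small x, f (x/C1) ≤ f x / a
  have hkey : ∀ x : ℝ, 0 < x → x < δ → f (x / C1) ≤ f x / a := by
    intro x hx hxδ
    have hx' : 0 < x / C1 := div_pos hx hC1pos
    have hx'δ : x / C1 < δ := lt_of_lt_of_le (by
      rw [div_lt_iff₀ hC1pos]; nlinarith) hxδ.le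
    have h1 := (hbound _ hx' hx'δ).2
    have h2 := (hbound _ hx hxδ).1
    have hdivm : (x / C1) ^ m = x ^ m / C1 ^ m := Real.div_rpow hx.le hC1pos.le m
    have hid : c + ε = (c - ε) * a := by
      rw [hε]; field_simp; ring
    have hxm : (0:ℝ) < x ^ m := Real.rpow_pos_of_pos hx m
    calc f (x / C1) ≤ (c + ε) * ((x / C1) ^ m) := h1
      _ = (c - ε) * a * (x ^ m / (a * a)) := by rw [hid, hdivm, hC1m]
      _ = (c - ε) * x ^ m / a := by field_simp
      _ ≤ f x / a := by gcongr
  -- the second constant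
  have hfδpos : 0 < f δ := by
    have := hmono (Set.mem_Ici.2 le_rfl) (Set.mem_Ici.2 hδpos.le) hδpos
    rwa [hf0] at this
  set β := finv (f δ / a) with hβ
  have hβpos : 0 < β := hfinv_pos _ (div_pos hfδpos hapos)
  have hfinv1pos : 0 < finv 1 := hfinv_pos 1 one_pos
  refine ⟨max C1 (finv 1 / β), lt_of_lt_of_le hC1pos (le_max_left _ _), ?_⟩
  intro t ht
  obtain ⟨ht0, ht1⟩ := ht
  have htanneg : 0 ≤ t / a := div_nonneg ht0.le hapos.le
  have hfinvta : 0 ≤ finv (t / a) := (hinv _ htanneg).1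
  obtain ⟨hx0, hfx⟩ := hinv t ht0.le
  set x := finv t with hxdef
  have hxpos : 0 < x := hfinv_pos t ht0
  by_cases hcase : x < δ
  · -- small case
    have hfc := hkey x hxpos hcase
    rw [hfx] at hfc
    have hta : f (finv (t / a)) = t / a := (hinv _ htanneg).2
    have hle : x / C1 ≤ finv (t / a) := by
      have := (hmono.le_iff_le (Set.mem_Ici.2 (div_pos hxpos hC1pos).le)
        (Set.mem_Ici.2 hfinvta)).1 (by rw [hta]; exact hfc)
      exact this
    have : x ≤ C1 * finv (t / a) := by
      rw [div_le_iff₀ hC1pos] at hle; linarith [hle]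
    calc x ≤ C1 * finv (t / a) := this
      _ ≤ max C1 (finv 1 / β) * finv (t / a) :=
          mul_le_mul_of_nonneg_right (le_max_left _ _) hfinvta
  · -- large case
    push_neg at hcase
    have htge : f δ ≤ t := by
      rw [← hfx]
      exact (hmono.monotoneOn (Set.mem_Ici.2 hδpos.le) (Set.mem_Ici.2 hx0)) hcase
    have hta_ge : f δ / a ≤ t / a := by gcongr
    have hβle : β ≤ finv (t / a) := hfinv_mono _ _ (div_pos hfδpos hapos).le hta_ge
    have hxle : x ≤ finv 1 := hfinv_mono t 1 ht0.le ht1.le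
    calc x ≤ finv 1 := hxle
      _ = (finv 1 / β) * β := by field_simp
      _ ≤ (finv 1 / β) * finv (t / a) :=
          mul_le_mul_of_nonneg_left hβle (div_nonneg hfinv1pos.le hβpos.le)
      _ ≤ max C1 (finv 1 / β) * finv (t / a) :=
          mul_le_mul_of_nonneg_right (le_max_right _ _) hfinvta
end

section
/- Let f be mildly infinite type at zero with doubling constant σ for Λ_f. Then for any a > 1 there exists t₀ > 0 such that f⁻¹(t/a) ≥ (1/σ)·f⁻¹(t) for all t ∈ (0, t₀). -/
/-- if `f` is mildly infinite type at zero with doubling constant `σ`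
for `Λ_f`, then for any `a > 1` one has `f⁻¹(t/a) ≥ (1/σ)·f⁻¹(t)` for small `t > 0`. -/
theorem stmt_10 (f finv : ℝ → ℝ)
    (hsmooth : ContDiff ℝ (⊤ : ℕ∞) f)
    (hmono : StrictMonoOn f (Set.Ici 0))
    (hnonneg : ∀ x ≥ (0:ℝ), 0 ≤ f x)
    (hflat : ∀ n : ℕ, iteratedDeriv n f 0 = 0)
    (R σ : ℝ) (hR : 0 < R) (hR1 : f R < 1) (hσ : 1 < σ)
    (hdbl : ∀ x ∈ Set.Icc 0 (R / σ), 2 * LambdaF f x ≤ LambdaF f (σ * x))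
    (hinv : ∀ t ≥ (0:ℝ), 0 ≤ finv t ∧ f (finv t) = t) :
    ∀ a > (1:ℝ), ∃ t₀ > (0:ℝ), ∀ t ∈ Set.Ioo (0:ℝ) t₀,
      (1 / σ) * finv t ≤ finv (t / a) := by
  intro a ha
  have hf0 : f 0 = 0 := by
    have h := hflat 0
    simpa using h
  have hσ0 : (0:ℝ) < σ := lt_trans one_pos hσ
  have ha0 : (0:ℝ) < a := lt_trans one_pos ha
  have hfR : 0 < f R := by
    have := hmono (Set.mem_Ici.2 le_rfl) (Set.mem_Ici.2 hR.le) hR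
    linarith
  refine ⟨min (f R) (1/a), lt_min hfR (by positivity), ?_⟩
  rintro t ⟨ht0, htlt⟩
  have htfR : t < f R := lt_of_lt_of_le htlt (min_le_left _ _)
  have hta : t < 1/a := lt_of_lt_of_le htlt (min_le_right _ _)
  have ht1 : t < 1 := lt_trans htfR hR1
  obtain ⟨hx0, hfx⟩ := hinv t ht0.le
  set x := finv t with hxdef
  have hxpos : 0 < x := by
    rcases lt_or_eq_of_le hx0 with h | h
    · exact h
    · exfalso; rw [← h, hf0] at hfx; linarith
  have hxR : x < R := by
    exact (hmono.lt_iff_lt (Set.mem_Ici.2 hx0) (Set.mem_Ici.2 hR.le)).1 (by rw [hfx]; exact htfR)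
  set y := x / σ with hydef
  have hy0 : 0 < y := div_pos hxpos hσ0
  have hyR : y ≤ R / σ := div_le_div_of_nonneg_right hxR.le hσ0.le
  have hyx : y < x := by
    rw [hydef]
    exact div_lt_self hxpos hσ
  have hfy_pos : 0 < f y := by
    have := hmono (Set.mem_Ici.2 le_rfl) (Set.mem_Ici.2 hy0.le) hy0
    linarith
  have hfy_lt : f y < t := by
    have := hmono (Set.mem_Ici.2 hy0.le) (Set.mem_Ici.2 hx0) hyx
    linarith [hfx]
  have hlogt : Real.log t < 0 := Real.log_neg ht0 ht1
  have hlogfy : Real.log (f y) < 0 := Real.log_neg hfy_pos (lt_trans hfy_lt ht1)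
  have hd := hdbl y ⟨hy0.le, hyR⟩
  have hσy : σ * y = x := by rw [hydef, mul_comm]; exact div_mul_cancel₀ x hσ0.ne'
  rw [hσy] at hd
  rw [LambdaF, LambdaF, if_neg hy0.ne', if_neg hxpos.ne', hfx] at hd
  -- hd : 2 * (-1 / Real.log (f y)) ≤ -1 / Real.log t
  have key : Real.log (f y) ≤ 2 * Real.log t := by
    set A := -Real.log (f y) with hA
    set B := -Real.log t with hB
    have hApos : 0 < A := by simp [hA]; linarith
    have hBpos : 0 < B := by simp [hB]; linarith
    have hd' : 2 / A ≤ 1 / B := by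
      have : (-1 : ℝ) / Real.log (f y) = 1 / A := by rw [hA, div_neg, neg_div]
      have h2 : (-1 : ℝ) / Real.log t = 1 / B := by rw [hB, div_neg, neg_div]
      calc 2 / A = 2 * (1 / A) := by ring
        _ = 2 * (-1 / Real.log (f y)) := by rw [this]
        _ ≤ -1 / Real.log t := hd
        _ = 1 / B := h2
    have : 2 * B ≤ A := by
      rw [div_le_div_iff₀ hApos hBpos] at hd'
      linarith
    have hAeq : Real.log (f y) = -A := by rw [hA]; ring
    have hBeq : Real.log t = -B := by rw [hB]; ring
    rw [hAeq, hBeq]; linarith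
  have hfy_le : f y ≤ t ^ 2 := by
    have : Real.log (f y) ≤ Real.log (t ^ 2) := by
      rw [Real.log_pow]; push_cast; linarith
    exact (Real.log_le_log_iff hfy_pos (by positivity)).1 this
  have hfy_le' : f y ≤ t / a := by
    have : t ^ 2 ≤ t / a := by
      have h1 : t * t ≤ t * (1 / a) := by
        apply mul_le_mul_of_nonneg_left hta.le ht0.le
      calc t ^ 2 = t * t := sq t
        _ ≤ t * (1 / a) := h1
        _ = t / a := by ring
    linarith
  obtain ⟨hz0, hfz⟩ := hinv (t / a) (by positivity)
  have : y ≤ finv (t / a) := by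
    by_contra h
    push_neg at h
    have := hmono (Set.mem_Ici.2 hz0) (Set.mem_Ici.2 hy0.le) h
    rw [hfz] at this
    linarith
  calc (1 / σ) * finv t = y := by rw [hydef, hxdef]; ring
    _ ≤ finv (t / a) := this
end

section
/- Let F : ℂ^{n-1} → ℝ be given by F(z') = f₁(|z¹|) + ⋯ + f_k(|z^k|) where z' = (z¹,…,z^k) ∈ ℂ^{n₁}×⋯×ℂ^{n_k} and each f_j : [0,∞) → [0,∞) is strictly increasing with f_j(0)=0. Fix α_j > 1, β > 1, and let z = (z¹,…,z^k,z_n) satisfy Re z_n > kβ[f₁(α₁|z¹|) + ⋯ + f_k(α_k|z^k|)]. Then for every w = (w¹,…,w^k,w_n) with |w^j - z^j| < ((α_j-1)/α_j)·f_j⁻¹(Re z_n/(kβ)) for each j and |w_n - z_n| < ((β-1)/β)·Re z_n, one has Re w_n > F(w'). -/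
/-!
Put `T = Re z_n / (kβ)`. Since every `f_j` is nonnegative, each summand `f_j(α_j |z^j|)`
of the hypothesis is below `T = f_j(f_j⁻¹ T)`, so `α_j |z^j| < f_j⁻¹ T`. The radius
`((α_j - 1)/α_j) f_j⁻¹ T` is exactly what keeps `|w^j| < f_j⁻¹ T`, hence
`F(w') < kT = Re z_n / β`. The radius `((β - 1)/β) Re z_n` in the last variable
gives `Re w_n > Re z_n / β`.
-/

open Finset

lemma MonotoneOn.map_nonneg {f : ℝ → ℝ} (hf : MonotoneOn f (Set.Ici 0)) (h0 : f 0 = 0)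
    {x : ℝ} (hx : 0 ≤ x) : 0 ≤ f x :=
  h0 ▸ hf (Set.mem_Ici.2 le_rfl) hx hx

lemma norm_lt_of_mul_norm_lt_of_norm_sub_lt {E : Type*} [SeminormedAddCommGroup E]
    {α r : ℝ} (hα : 0 < α) {z w : E} (hz : α * ‖z‖ < r)
    (hw : ‖w - z‖ < (α - 1) / α * r) : ‖w‖ < r := by
  have hz' : ‖z‖ < r / α := by rwa [lt_div_iff₀' hα]
  calc ‖w‖ ≤ ‖z‖ + ‖w - z‖ := norm_le_norm_add_norm_sub' w z
    _ < r / α + (α - 1) / α * r := add_lt_add hz' hw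
    _ = r := by field_simp; ring

lemma StrictMonoOn.map_norm_lt_of_norm_sub_lt {E : Type*} [SeminormedAddCommGroup E]
    {f : ℝ → ℝ} (hf : StrictMonoOn f (Set.Ici 0)) {α r : ℝ} (hα : 0 < α) (hr : 0 ≤ r)
    {z w : E} (hz : f (α * ‖z‖) < f r) (hw : ‖w - z‖ < (α - 1) / α * r) : f ‖w‖ < f r := by
  have hzr : α * ‖z‖ < r := (hf.lt_iff_lt (Set.mem_Ici.2 (by positivity)) hr).1 hz
  exact hf (norm_nonneg w) hr (norm_lt_of_mul_norm_lt_of_norm_sub_lt hα hzr hw)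

lemma Complex.re_div_lt_re_of_norm_sub_lt {β : ℝ} (hβ : 0 < β) {z w : ℂ}
    (h : ‖w - z‖ < (β - 1) / β * z.re) : z.re / β < w.re := by
  have hre : z.re - w.re ≤ ‖w - z‖ := by
    simpa [norm_sub_rev] using Complex.re_le_norm (z - w)
  have hrad : (β - 1) / β * z.re = z.re - z.re / β := by field_simp
  linarith

-- An inequality rather than an equality because of the junk value `x / 0 = 0` at `k = 0`.
lemma natCast_mul_div_natCast_mul_le {k : ℕ} {x β : ℝ} (hx : 0 ≤ x) (hβ : 0 < β) :
    k * (x / (k * β)) ≤ x / β := by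
  rcases eq_or_ne (k : ℝ) 0 with hk | hk
  · rw [hk, zero_mul]
    positivity
  · rw [← mul_div_assoc, mul_div_mul_left x β hk]

theorem stmt_14_general (k : ℕ) (n : Fin k → ℕ)
    (f finv : Fin k → ℝ → ℝ)
    (hf : ∀ j, StrictMonoOn (f j) (Set.Ici 0)) (hf0 : ∀ j, f j 0 = 0)
    (hinv : ∀ j, ∀ t ≥ (0:ℝ), 0 ≤ finv j t ∧ f j (finv j t) = t)
    (α : Fin k → ℝ) (hα : ∀ j, 1 < α j) (β : ℝ) (hβ : 1 < β)
    (z : (j : Fin k) → EuclideanSpace ℂ (Fin (n j))) (zn : ℂ)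
    (hz : (k : ℝ) * β * (∑ j, f j (α j * ‖z j‖)) < zn.re)
    (w : (j : Fin k) → EuclideanSpace ℂ (Fin (n j))) (wn : ℂ)
    (hw : ∀ j, ‖w j - z j‖ < ((α j - 1) / α j) * finv j (zn.re / (k * β)))
    (hwn : ‖wn - zn‖ < ((β - 1) / β) * zn.re) :
    (∑ j, f j ‖w j‖) < wn.re := by
  have hβ0 : 0 < β := by linarith
  set T := zn.re / (k * β)
  have hfz : ∀ j, 0 ≤ f j (α j * ‖z j‖) := fun j =>
    (hf j).monotoneOn.map_nonneg (hf0 j) (by have := hα j; positivity)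
  have hzn : 0 ≤ zn.re :=
    (mul_nonneg (by positivity) (sum_nonneg fun j _ ↦ hfz j)).trans hz.le
  have hfw : ∀ j, f j ‖w j‖ < T := by
    intro j
    have hkβ : 0 < (k : ℝ) * β := mul_pos (by exact_mod_cast j.pos) hβ0
    obtain ⟨hr, hfr⟩ := hinv j T (div_nonneg hzn hkβ.le)
    have hfzT : f j (α j * ‖z j‖) < T := by
      rw [lt_div_iff₀' hkβ]
      exact (mul_le_mul_of_nonneg_left (single_le_sum (fun i _ ↦ hfz i) (mem_univ j))
        hkβ.le).trans_lt hz
    rw [← hfr] at hfzT ⊢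
    exact (hf j).map_norm_lt_of_norm_sub_lt (by linarith [hα j]) hr hfzT (hw j)
  calc ∑ j, f j ‖w j‖ ≤ k * T := by
        simpa using sum_le_card_nsmul univ _ T fun j _ ↦ (hfw j).le
    _ ≤ zn.re / β := natCast_mul_div_natCast_mul_le hzn hβ0
    _ < wn.re := Complex.re_div_lt_re_of_norm_sub_lt hβ0 hwn

/-- the nonisotropic polydisc `A_z` around a point `z` of the approach
region `Γ_k^{α,β}` is contained in the domain `{Re w_n > F(w')}`. -/
theorem stmt_14 (k : ℕ) (hk : 1 ≤ k) (n : Fin k → ℕ)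
    (f finv : Fin k → ℝ → ℝ)
    (hf : ∀ j, StrictMonoOn (f j) (Set.Ici 0)) (hf0 : ∀ j, f j 0 = 0)
    (hinv : ∀ j, ∀ t ≥ (0:ℝ), 0 ≤ finv j t ∧ f j (finv j t) = t)
    (α : Fin k → ℝ) (hα : ∀ j, 1 < α j) (β : ℝ) (hβ : 1 < β)
    (z : (j : Fin k) → EuclideanSpace ℂ (Fin (n j))) (zn : ℂ)
    (hz : (k : ℝ) * β * (∑ j, f j (α j * ‖z j‖)) < zn.re)
    (w : (j : Fin k) → EuclideanSpace ℂ (Fin (n j))) (wn : ℂ)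
    (hw : ∀ j, ‖w j - z j‖ < ((α j - 1) / α j) * finv j (zn.re / (k * β)))
    (hwn : ‖wn - zn‖ < ((β - 1) / β) * zn.re) :
    (∑ j, f j ‖w j‖) < wn.re :=
  stmt_14_general k n f finv hf hf0 hinv α hα β hβ z zn hz w wn hw hwn
end

section
/- Let f : [0,∞) → [0,∞) be either finite type at zero or mildly infinite type at zero, and let k ≥ 1, M > 0. Then there exists C > 0 such that ∫₀¹ r^{2k+1}/(f(r)+t)^{2(k+1)} dr ≤ C·[f⁻¹(t)]^{2(k+1)}/t^{2(k+1)} for all 0 < t < M. -/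
open MeasureTheory Set Filter

/-- `f` is finite type at zero. -/
def FiniteTypeAtZero (f : ℝ → ℝ) : Prop :=
  ContinuousOn f (Set.Ici 0) ∧ StrictMonoOn f (Set.Ici 0) ∧
    (∀ x ≥ (0:ℝ), 0 ≤ f x) ∧
    ∃ m > (1:ℝ), ∃ c > (0:ℝ),
      Filter.Tendsto (fun x => f x / x ^ m) (nhdsWithin 0 (Set.Ioi 0)) (nhds c)

/-- `f` is mildly infinite type at zero. -/
def MildlyInfiniteTypeAtZero (f : ℝ → ℝ) : Prop :=
  ContDiff ℝ (⊤ : ℕ∞) f ∧ StrictMonoOn f (Set.Ici 0) ∧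
    (∀ x ≥ (0:ℝ), 0 ≤ f x) ∧
    (∀ n : ℕ, iteratedDeriv n f 0 = 0) ∧
    ∃ R : ℝ, 0 < R ∧ f R < 1 ∧ ∃ σ > (1:ℝ),
      ∀ x ∈ Set.Icc 0 (R / σ), 2 * LambdaF f x ≤ LambdaF f (σ * x)

/-- interval integrability of `r^q / g r` for continuous positive `g`. -/
lemma aux_ii {g : ℝ → ℝ} {q : ℕ} {u v : ℝ} (huv : u ≤ v)
    (hg : ContinuousOn g (Set.Icc u v)) (hgpos : ∀ r ∈ Set.Icc u v, 0 < g r) :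
    IntervalIntegrable (fun r => r ^ q / g r) volume u v := by
  apply ContinuousOn.intervalIntegrable
  rw [Set.uIcc_of_le huv]
  exact ((continuous_pow q).continuousOn).div hg (fun x hx => (hgpos x hx).ne')

/-- The core estimate: under a multiplicative growth step condition
`lam * f x ≤ f (sig * x)` (with `sig < lam`), the tail integral
`∫_a^{r₀} r^{2k+1}/f(r)^{2(k+1)}` is bounded by a constant times
`a^{2(k+1)}/f(a)^{2(k+1)}`. -/
lemma core_bound (f : ℝ → ℝ) (k : ℕ) (sig lam r₀ : ℝ)
    (hsig : 1 < sig) (hlam : sig < lam) (hr₀ : 0 < r₀)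
    (hmono : MonotoneOn f (Set.Ici 0))
    (hpos : ∀ x, 0 < x → 0 < f x)
    (hcont : ContinuousOn f (Set.Ici 0))
    (hstep : ∀ x, 0 < x → sig * x ≤ r₀ → lam * f x ≤ f (sig * x)) :
    ∀ a, 0 < a → a ≤ r₀ →
      ∫ r in a..r₀, r ^ (2 * k + 1) / f r ^ (2 * (k + 1))
        ≤ sig ^ (2 * (k + 1)) / (1 - (sig / lam) ^ (2 * (k + 1))) * a ^ (2 * (k + 1)) / f a ^ (2 * (k + 1)) := by
  set p : ℕ := 2 * (k + 1) with hpdef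
  have hpp : p = (2 * k + 1) + 1 := by omega
  have hsig0 : (0:ℝ) < sig := lt_trans one_pos hsig
  have hlam0 : (0:ℝ) < lam := lt_trans hsig0 hlam
  set q : ℝ := (sig / lam) ^ p with hqdef
  have hq0 : 0 < q := pow_pos (div_pos hsig0 hlam0) p
  have hq1 : q < 1 := pow_lt_one₀ (le_of_lt (div_pos hsig0 hlam0)) ((div_lt_one hlam0).2 hlam) (by omega)
  have h1q : 0 < 1 - q := by linarith
  set C : ℝ := sig ^ p / (1 - q) with hCdef
  have hC0 : 0 < C := div_pos (pow_pos hsig0 p) h1q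
  have hCs : sig ^ p ≤ C := by
    rw [hCdef, le_div_iff₀ h1q]
    nlinarith [pow_pos hsig0 p]
  have hkey : sig ^ p + C * q = C := by
    rw [hCdef]; field_simp; ring
  -- integrability helper
  have hii : ∀ u v : ℝ, 0 < u → u ≤ v →
      IntervalIntegrable (fun r => r ^ (2 * k + 1) / f r ^ p) volume u v := by
    intro u v hu huv
    apply aux_ii huv ((hcont.mono (fun x hx => le_trans hu.le hx.1)).pow p)
    exact fun r hr => pow_pos (hpos r (lt_of_lt_of_le hu hr.1)) p
  -- base argument: when r₀ ≤ sig * x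
  have base : ∀ x, 0 < x → x ≤ r₀ → r₀ ≤ sig * x →
      ∫ r in x..r₀, r ^ (2 * k + 1) / f r ^ p ≤ C * x ^ p / f x ^ p := by
    intro x hx hxr hrx
    have hfx : 0 < f x := hpos x hx
    have hfxp : 0 < f x ^ p := pow_pos hfx p
    have hb : ∫ r in x..r₀, r ^ (2 * k + 1) / f r ^ p
        ≤ ∫ _r in x..r₀, r₀ ^ (2 * k + 1) / f x ^ p := by
      apply intervalIntegral.integral_mono_on hxr (hii x r₀ hx hxr) intervalIntegrable_const
      intro r hr
      have hr0 : 0 < r := lt_of_lt_of_le hx hr.1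
      apply div_le_div₀ (by positivity) (pow_le_pow_left₀ hr0.le hr.2 _) hfxp
      exact pow_le_pow_left₀ hfx.le (hmono hx.le (le_trans hx.le hr.1) hr.1) p
    rw [intervalIntegral.integral_const, smul_eq_mul] at hb
    have e1 : (r₀ - x) * r₀ ^ (2 * k + 1) ≤ r₀ ^ p := by
      have hre : r₀ ^ p = r₀ ^ (2 * k + 1) * r₀ := by rw [hpp, pow_succ]
      rw [hre]
      nlinarith [pow_pos hr₀ (2 * k + 1)]
    have e2 : r₀ ^ p ≤ sig ^ p * x ^ p := by
      rw [← mul_pow]; exact pow_le_pow_left₀ hr₀.le hrx p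
    have e3 : sig ^ p * x ^ p ≤ C * x ^ p :=
      mul_le_mul_of_nonneg_right hCs (by positivity)
    have h2 : (r₀ - x) * (r₀ ^ (2 * k + 1) / f x ^ p) ≤ C * x ^ p / f x ^ p := by
      rw [mul_div_assoc']
      exact div_le_div_of_nonneg_right (by linarith) hfxp.le
    linarith
  -- main induction
  have key : ∀ n : ℕ, ∀ x, 0 < x → x ≤ r₀ → r₀ ≤ sig ^ (n + 1) * x →
      ∫ r in x..r₀, r ^ (2 * k + 1) / f r ^ p ≤ C * x ^ p / f x ^ p := by
    intro n
    induction n with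
    | zero =>
      intro x hx hxr hrx
      exact base x hx hxr (by rw [pow_one] at hrx; exact hrx)
    | succ n ih =>
      intro x hx hxr hrx
      by_cases hc : r₀ ≤ sig * x
      · exact base x hx hxr hc
      push_neg at hc
      have hsx : 0 < sig * x := mul_pos hsig0 hx
      have hxsx : x ≤ sig * x := by nlinarith
      have hfx : 0 < f x := hpos x hx
      have hfxp : 0 < f x ^ p := pow_pos hfx p
      have hfsx : 0 < f (sig * x) := hpos _ hsx
      have hstep' : lam * f x ≤ f (sig * x) := hstep x hx hc.le
      have i1 : IntervalIntegrable (fun r => r ^ (2 * k + 1) / f r ^ p) volume x (sig * x) :=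
        hii x (sig * x) hx hxsx
      have i2 : IntervalIntegrable (fun r => r ^ (2 * k + 1) / f r ^ p) volume (sig * x) r₀ :=
        hii (sig * x) r₀ hsx hc.le
      have hsplit : ∫ r in x..r₀, r ^ (2 * k + 1) / f r ^ p
          = (∫ r in x..(sig * x), r ^ (2 * k + 1) / f r ^ p)
            + ∫ r in (sig * x)..r₀, r ^ (2 * k + 1) / f r ^ p :=
        (intervalIntegral.integral_add_adjacent_intervals i1 i2).symm
      -- bound the first piece
      have hA : (∫ r in x..(sig * x), r ^ (2 * k + 1) / f r ^ p)
          ≤ sig ^ p * x ^ p / f x ^ p := by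
        have hb : (∫ r in x..(sig * x), r ^ (2 * k + 1) / f r ^ p)
            ≤ ∫ _r in x..(sig * x), (sig * x) ^ (2 * k + 1) / f x ^ p := by
          apply intervalIntegral.integral_mono_on hxsx i1 intervalIntegrable_const
          intro r hr
          have hr0 : 0 < r := lt_of_lt_of_le hx hr.1
          apply div_le_div₀ (by positivity) (pow_le_pow_left₀ hr0.le hr.2 _) hfxp
          exact pow_le_pow_left₀ hfx.le (hmono hx.le (le_trans hx.le hr.1) hr.1) p
        rw [intervalIntegral.integral_const, smul_eq_mul] at hb
        have e1 : (sig * x - x) * (sig * x) ^ (2 * k + 1) ≤ (sig * x) ^ p := by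
          have hre : (sig * x) ^ p = (sig * x) ^ (2 * k + 1) * (sig * x) := by
            rw [hpp, pow_succ]
          rw [hre]
          nlinarith [pow_pos hsx (2 * k + 1)]
        have e2 : (sig * x) ^ p = sig ^ p * x ^ p := mul_pow sig x p
        have h2 : (sig * x - x) * ((sig * x) ^ (2 * k + 1) / f x ^ p)
            ≤ sig ^ p * x ^ p / f x ^ p := by
          rw [mul_div_assoc']
          refine div_le_div_of_nonneg_right ?_ hfxp.le
          calc (sig * x - x) * (sig * x) ^ (2 * k + 1) ≤ (sig * x) ^ p := e1
            _ = sig ^ p * x ^ p := e2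
        linarith
      -- bound the second piece via induction hypothesis
      have hB : (∫ r in (sig * x)..r₀, r ^ (2 * k + 1) / f r ^ p)
          ≤ C * q * x ^ p / f x ^ p := by
        have h1 := ih (sig * x) hsx hc.le (by rw [← mul_assoc, ← pow_succ]; exact hrx)
        have h2 : C * (sig * x) ^ p / f (sig * x) ^ p
            ≤ C * (sig * x) ^ p / (lam * f x) ^ p := by
          exact div_le_div_of_nonneg_left (by positivity)
            (pow_pos (mul_pos hlam0 hfx) p)
            (pow_le_pow_left₀ (by positivity) hstep' p)
        have h3 : C * (sig * x) ^ p / (lam * f x) ^ p = C * q * x ^ p / f x ^ p := by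
          rw [hqdef, mul_pow, mul_pow, div_pow]
          field_simp
        linarith
      have hfin : sig ^ p * x ^ p / f x ^ p + C * q * x ^ p / f x ^ p
          = C * x ^ p / f x ^ p := by
        rw [← add_div, ← add_mul, hkey]
      rw [hsplit]
      linarith
  -- conclude
  intro a ha har
  obtain ⟨n, hn⟩ := pow_unbounded_of_one_lt (r₀ / a) hsig
  refine key n a ha har ?_
  have h1 : r₀ < sig ^ n * a := (div_lt_iff₀ ha).1 hn
  have h2 : sig ^ n * a ≤ sig ^ (n + 1) * a :=
    mul_le_mul_of_nonneg_right (pow_le_pow_right₀ hsig.le (Nat.le_succ n)) ha.le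
  linarith

/-- The gluing argument: given the core estimate on `[a, r₀]` and a linear
upper bound for `f` near `0`, deduce the full weighted integral estimate. -/
lemma glue_bound (f finv : ℝ → ℝ) (k : ℕ) (M : ℝ)
    (hinv : ∀ t ≥ (0:ℝ), 0 ≤ finv t ∧ f (finv t) = t)
    (hmono : MonotoneOn f (Set.Ici 0))
    (hcont : ContinuousOn f (Set.Ici 0))
    (hf0 : f 0 = 0) (hpos : ∀ x, 0 < x → 0 < f x)
    (r₀ : ℝ) (hr₀ : 0 < r₀) (hr₁ : r₀ ≤ 1)
    (C₁ : ℝ) (hC₁ : 0 < C₁)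
    (hcore : ∀ a, 0 < a → a ≤ r₀ →
      ∫ r in a..r₀, r ^ (2 * k + 1) / f r ^ (2 * (k + 1))
        ≤ C₁ * a ^ (2 * (k + 1)) / f a ^ (2 * (k + 1)))
    (K : ℝ) (hK : 0 < K) (hlin : ∀ a, 0 < a → a ≤ r₀ → f a ≤ K * a) :
    ∃ C > (0:ℝ), ∀ t : ℝ, 0 < t → t < M →
      (∫ r in (0:ℝ)..1, r ^ (2 * k + 1) / (f r + t) ^ (2 * (k + 1)))
        ≤ C * (finv t) ^ (2 * (k + 1)) / t ^ (2 * (k + 1)) := by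
  set p : ℕ := 2 * (k + 1) with hpdef
  have hpp : p = (2 * k + 1) + 1 := by omega
  have hfr₀ : 0 < f r₀ := hpos r₀ hr₀
  have hc3 : 0 < K ^ p / f r₀ ^ p := div_pos (pow_pos hK p) (pow_pos hfr₀ p)
  have hc4 : 0 < 1 / r₀ ^ p := by positivity
  refine ⟨1 + C₁ + K ^ p / f r₀ ^ p + 1 / r₀ ^ p, by positivity, ?_⟩
  intro t ht htM
  obtain ⟨ha0, hfa⟩ := hinv t ht.le
  set a : ℝ := finv t with hadef
  have hapos : 0 < a := by
    rcases eq_or_lt_of_le ha0 with h | h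
    · exfalso; rw [← h, hf0] at hfa; exact absurd hfa.symm (ne_of_gt ht)
    · exact h
  have hfnn : ∀ r : ℝ, 0 ≤ r → 0 ≤ f r := by
    intro r hr
    rcases eq_or_lt_of_le hr with h | h
    · rw [← h, hf0]
    · exact (hpos r h).le
  have htp : 0 < t ^ p := pow_pos ht p
  have hap : 0 < a ^ p := pow_pos hapos p
  -- the full integrand is integrable on any subinterval of [0,1]
  have hii : ∀ u v : ℝ, 0 ≤ u → u ≤ v → v ≤ 1 →
      IntervalIntegrable (fun r => r ^ (2 * k + 1) / (f r + t) ^ p) volume u v := by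
    intro u v hu huv hv
    apply aux_ii huv
    · apply ContinuousOn.pow
      apply ContinuousOn.add (hcont.mono (fun x hx => le_trans hu hx.1)) continuousOn_const
    · intro r hr
      have : 0 ≤ f r := hfnn r (le_trans hu hr.1)
      positivity
  have hptp : ∀ r : ℝ, 0 ≤ r → t ^ p ≤ (f r + t) ^ p := by
    intro r hr
    exact pow_le_pow_left₀ ht.le (by linarith [hfnn r hr]) p
  by_cases har : a ≤ r₀
  · -- case A : a ≤ r₀
    have ha1 : a ≤ 1 := le_trans har hr₁
    have i1 : IntervalIntegrable (fun r => r ^ (2 * k + 1) / (f r + t) ^ p) volume 0 a :=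
      hii 0 a le_rfl ha0 ha1
    have i2 : IntervalIntegrable (fun r => r ^ (2 * k + 1) / (f r + t) ^ p) volume a r₀ :=
      hii a r₀ ha0 har hr₁
    have i3 : IntervalIntegrable (fun r => r ^ (2 * k + 1) / (f r + t) ^ p) volume r₀ 1 :=
      hii r₀ 1 hr₀.le hr₁ le_rfl
    have hsplit : (∫ r in (0:ℝ)..1, r ^ (2 * k + 1) / (f r + t) ^ p)
        = (∫ r in (0:ℝ)..a, r ^ (2 * k + 1) / (f r + t) ^ p)
          + (∫ r in a..r₀, r ^ (2 * k + 1) / (f r + t) ^ p)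
          + (∫ r in r₀..(1:ℝ), r ^ (2 * k + 1) / (f r + t) ^ p) := by
      rw [intervalIntegral.integral_add_adjacent_intervals i1 i2,
        intervalIntegral.integral_add_adjacent_intervals (i1.trans i2) i3]
    -- piece 1
    have hI0 : (∫ r in (0:ℝ)..a, r ^ (2 * k + 1) / (f r + t) ^ p) ≤ a ^ p / t ^ p := by
      have hb : (∫ r in (0:ℝ)..a, r ^ (2 * k + 1) / (f r + t) ^ p)
          ≤ ∫ r in (0:ℝ)..a, r ^ (2 * k + 1) / t ^ p := by
        apply intervalIntegral.integral_mono_on ha0 i1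
        · apply IntervalIntegrable.div_const
          exact (continuous_pow (2 * k + 1)).intervalIntegrable 0 a
        · intro r hr
          exact div_le_div_of_nonneg_left (pow_nonneg hr.1 _) htp (hptp r hr.1)
      have hb2 : (∫ r in (0:ℝ)..a, r ^ (2 * k + 1) / t ^ p) ≤ a ^ p / t ^ p := by
        rw [intervalIntegral.integral_div, integral_pow]
        apply div_le_div_of_nonneg_right ?_ htp.le
        rw [zero_pow (by omega), sub_zero]
        apply div_le_self (by positivity)
        have hk0 : (0:ℝ) ≤ (k:ℝ) := Nat.cast_nonneg k
        linarith
      linarith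
    -- piece 2
    have hI1 : (∫ r in a..r₀, r ^ (2 * k + 1) / (f r + t) ^ p) ≤ C₁ * a ^ p / t ^ p := by
      have hb : (∫ r in a..r₀, r ^ (2 * k + 1) / (f r + t) ^ p)
          ≤ ∫ r in a..r₀, r ^ (2 * k + 1) / f r ^ p := by
        apply intervalIntegral.integral_mono_on har i2
        · apply aux_ii har ((hcont.mono (fun x hx => le_trans hapos.le hx.1)).pow p)
          exact fun r hr => pow_pos (hpos r (lt_of_lt_of_le hapos hr.1)) p
        · intro r hr
          have hfr : 0 < f r := hpos r (lt_of_lt_of_le hapos hr.1)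
          apply div_le_div_of_nonneg_left (pow_nonneg (le_trans hapos.le hr.1) _) (pow_pos hfr p)
          exact pow_le_pow_left₀ hfr.le (by linarith) p
      have := hcore a hapos har
      rw [hfa] at this
      linarith
    -- piece 3
    have hI2 : (∫ r in r₀..(1:ℝ), r ^ (2 * k + 1) / (f r + t) ^ p)
        ≤ (K ^ p / f r₀ ^ p) * a ^ p / t ^ p := by
      have hb : (∫ r in r₀..(1:ℝ), r ^ (2 * k + 1) / (f r + t) ^ p)
          ≤ ∫ _r in r₀..(1:ℝ), 1 / f r₀ ^ p := by
        apply intervalIntegral.integral_mono_on hr₁ i3 intervalIntegrable_const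
        intro r hr
        have hr0 : 0 < r := lt_of_lt_of_le hr₀ hr.1
        apply div_le_div₀ (by positivity) ?_ (pow_pos hfr₀ p) ?_
        · calc r ^ (2 * k + 1) ≤ 1 ^ (2 * k + 1) := pow_le_pow_left₀ hr0.le hr.2 _
            _ = 1 := one_pow _
        · apply pow_le_pow_left₀ hfr₀.le
          have := hmono hr₀.le (le_trans hr₀.le hr.1) hr.1
          linarith
      rw [intervalIntegral.integral_const, smul_eq_mul] at hb
      have hb2 : (1 - r₀) * (1 / f r₀ ^ p) ≤ 1 / f r₀ ^ p := by
        apply mul_le_of_le_one_left (by positivity)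
        linarith
      -- 1 ≤ K^p a^p / t^p  since t = f a ≤ K a
      have hta : t ≤ K * a := by rw [← hfa]; exact hlin a hapos har
      have htKa : t ^ p ≤ K ^ p * a ^ p := by
        rw [← mul_pow]; exact pow_le_pow_left₀ ht.le hta p
      have hb3 : 1 / f r₀ ^ p ≤ (K ^ p / f r₀ ^ p) * a ^ p / t ^ p := by
        rw [div_le_div_iff₀ (pow_pos hfr₀ p) htp]
        calc 1 * t ^ p = t ^ p := one_mul _
          _ ≤ K ^ p * a ^ p := htKa
          _ = K ^ p / f r₀ ^ p * a ^ p * f r₀ ^ p := by field_simp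
      linarith
    rw [hsplit]
    have hsum : a ^ p / t ^ p + C₁ * a ^ p / t ^ p + (K ^ p / f r₀ ^ p) * a ^ p / t ^ p
        ≤ (1 + C₁ + K ^ p / f r₀ ^ p + 1 / r₀ ^ p) * a ^ p / t ^ p := by
      rw [← add_div, ← add_div]
      apply div_le_div_of_nonneg_right ?_ htp.le
      nlinarith [mul_pos hc4 hap]
    linarith
  · -- case B : r₀ < a
    push_neg at har
    have hb : (∫ r in (0:ℝ)..1, r ^ (2 * k + 1) / (f r + t) ^ p)
        ≤ ∫ r in (0:ℝ)..1, r ^ (2 * k + 1) / t ^ p := by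
      apply intervalIntegral.integral_mono_on zero_le_one (hii 0 1 le_rfl zero_le_one le_rfl)
      · apply IntervalIntegrable.div_const
        exact (continuous_pow (2 * k + 1)).intervalIntegrable 0 1
      · intro r hr
        exact div_le_div_of_nonneg_left (pow_nonneg hr.1 _) htp (hptp r hr.1)
    have hb2 : (∫ r in (0:ℝ)..1, r ^ (2 * k + 1) / t ^ p) ≤ 1 / t ^ p := by
      rw [intervalIntegral.integral_div, integral_pow]
      apply div_le_div_of_nonneg_right ?_ htp.le
      rw [zero_pow (by omega), sub_zero, one_pow]
      apply div_le_self zero_le_one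
      have hk0 : (0:ℝ) ≤ (k:ℝ) := Nat.cast_nonneg k
      linarith
    have hb3 : 1 / t ^ p ≤ (1 / r₀ ^ p) * a ^ p / t ^ p := by
      apply div_le_div_of_nonneg_right ?_ htp.le
      rw [one_div, ← div_eq_inv_mul, le_div_iff₀ (pow_pos hr₀ p), one_mul]
      exact pow_le_pow_left₀ hr₀.le har.le p
    have hfinal : (1 / r₀ ^ p) * a ^ p / t ^ p
        ≤ (1 + C₁ + K ^ p / f r₀ ^ p + 1 / r₀ ^ p) * a ^ p / t ^ p := by
      apply div_le_div_of_nonneg_right ?_ htp.le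
      nlinarith
    linarith

/-- Setup for the finite-type case: produce the growth-step data. -/
lemma finite_setup (f : ℝ → ℝ) (hf : FiniteTypeAtZero f) :
    ∃ r₀ : ℝ, 0 < r₀ ∧ r₀ ≤ 1 ∧ ∃ sig lam : ℝ, 1 < sig ∧ sig < lam ∧
      (∀ x, 0 < x → sig * x ≤ r₀ → lam * f x ≤ f (sig * x)) ∧
      ∃ K : ℝ, 0 < K ∧ ∀ a, 0 < a → a ≤ r₀ → f a ≤ K * a := by
  obtain ⟨hcont, hsm, hnn, m, hm, c, hc, hlim⟩ := hf
  -- two-sided bound near 0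
  have h1 : ∀ᶠ x in nhdsWithin 0 (Set.Ioi 0), f x / x ^ m < 2 * c :=
    hlim.eventually_lt_const (by linarith)
  have h2 : ∀ᶠ x in nhdsWithin 0 (Set.Ioi 0), c / 2 < f x / x ^ m :=
    hlim.eventually_const_lt (by linarith)
  obtain ⟨δ, hδ, hδP⟩ := Metric.mem_nhdsWithin_iff.1 (h1.and h2)
  have hbound : ∀ x : ℝ, 0 < x → x < δ → c / 2 * x ^ m ≤ f x ∧ f x ≤ 2 * c * x ^ m := by
    intro x hx hxδ
    have hmem : x ∈ Metric.ball 0 δ ∩ Set.Ioi 0 := by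
      constructor
      · rw [Metric.mem_ball, Real.dist_eq, sub_zero, abs_of_pos hx]; exact hxδ
      · exact hx
    have := hδP hmem
    have hxm : (0:ℝ) < x ^ m := Real.rpow_pos_of_pos hx m
    constructor
    · rw [← le_div_iff₀ hxm]; exact this.2.le
    · rw [← div_le_iff₀ hxm]; exact this.1.le
  -- choose sigma and lambda
  obtain ⟨sig, hsigdef⟩ : ∃ s : ℝ, s = (4:ℝ) ^ (1 / (m - 1)) + 1 := ⟨_, rfl⟩
  have hm1 : 0 < m - 1 := by linarith
  have h4 : (0:ℝ) < (4:ℝ) ^ (1 / (m - 1)) := Real.rpow_pos_of_pos (by norm_num) _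
  have hsig1 : 1 < sig := by rw [hsigdef]; linarith
  have hsig0 : 0 < sig := by linarith
  have hsigm1 : (4:ℝ) < sig ^ (m - 1) := by
    have : ((4:ℝ) ^ (1 / (m - 1))) ^ (m - 1) < sig ^ (m - 1) := by
      apply Real.rpow_lt_rpow h4.le (by rw [hsigdef]; linarith) hm1
    have e : ((4:ℝ) ^ (1 / (m - 1))) ^ (m - 1) = 4 := by
      rw [← Real.rpow_mul (by norm_num : (0:ℝ) ≤ 4), one_div,
        inv_mul_cancel₀ hm1.ne', Real.rpow_one]
    linarith
  obtain ⟨lam, hlamdef⟩ : ∃ l : ℝ, l = sig ^ m / 4 := ⟨_, rfl⟩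
  have hlam : sig < lam := by
    rw [hlamdef, lt_div_iff₀ (by norm_num : (0:ℝ) < 4)]
    have : sig ^ m = sig ^ (m - 1) * sig := by
      rw [← Real.rpow_add_one hsig0.ne' (m - 1)]; ring_nf
    rw [this]
    nlinarith
  refine ⟨min (δ / 2) 1, lt_min (by linarith) one_pos, min_le_right _ _, sig, lam, hsig1, hlam, ?_, 2 * c, by linarith, ?_⟩
  · -- step inequality
    intro x hx hsx
    have hsxδ : sig * x < δ := by
      have := le_trans hsx (min_le_left _ _); linarith
    have hxδ : x < δ := by nlinarith
    obtain ⟨hl1, hu1⟩ := hbound x hx hxδ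
    obtain ⟨hl2, _⟩ := hbound (sig * x) (mul_pos hsig0 hx) hsxδ
    have hsxm : (sig * x) ^ m = sig ^ m * x ^ m := Real.mul_rpow hsig0.le hx.le
    have hxm : (0:ℝ) < x ^ m := Real.rpow_pos_of_pos hx m
    have hsm0 : (0:ℝ) < sig ^ m := Real.rpow_pos_of_pos hsig0 m
    -- lam * f x ≤ lam * (2 c x^m) = (sig^m/4)*(2c x^m) = (c/2) sig^m x^m ≤ f (sig x)
    have e1 : lam * f x ≤ lam * (2 * c * x ^ m) := by
      apply mul_le_mul_of_nonneg_left hu1 (by rw [hlamdef]; positivity)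
    have e2 : lam * (2 * c * x ^ m) = c / 2 * (sig * x) ^ m := by
      rw [hsxm, hlamdef]; ring
    linarith
  · -- linear bound
    intro a ha har
    have haδ : a < δ := lt_of_le_of_lt (le_trans har (min_le_left _ _)) (by linarith)
    have ha1 : a ≤ 1 := le_trans har (min_le_right _ _)
    obtain ⟨_, hu⟩ := hbound a ha haδ
    have : a ^ m ≤ a := by
      calc a ^ m ≤ a ^ (1:ℝ) := Real.rpow_le_rpow_of_exponent_ge ha ha1 (by linarith)
        _ = a := Real.rpow_one a
    nlinarith

/-- Setup for the mildly-infinite-type case: produce the growth-step data. -/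
lemma mild_setup (f : ℝ → ℝ) (hf : MildlyInfiniteTypeAtZero f) (hf0 : f 0 = 0) :
    ∃ r₀ : ℝ, 0 < r₀ ∧ r₀ ≤ 1 ∧ ∃ sig lam : ℝ, 1 < sig ∧ sig < lam ∧
      (∀ x, 0 < x → sig * x ≤ r₀ → lam * f x ≤ f (sig * x)) ∧
      ∃ K : ℝ, 0 < K ∧ ∀ a, 0 < a → a ≤ r₀ → f a ≤ K * a := by
  obtain ⟨hsmooth, hsm, hnn, hder, R, hR, hfR, sig, hsig, hdb⟩ := hf
  have hsig0 : (0:ℝ) < sig := lt_trans one_pos hsig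
  have hpos : ∀ x : ℝ, 0 < x → 0 < f x := by
    intro x hx
    have := hsm (le_refl (0:ℝ) : (0:ℝ) ∈ Set.Ici 0) (le_of_lt hx : x ∈ Set.Ici 0) hx
    rwa [hf0] at this
  -- linear bound near 0 from vanishing derivative
  have hd1 : deriv f 0 = 0 := by have := hder 1; rwa [iteratedDeriv_one] at this
  have hDeriv : HasDerivAt f 0 0 := by
    have h := ((hsmooth.differentiable (by simp)) 0).hasDerivAt
    rwa [hd1] at h
  have hslope : Filter.Tendsto (fun z : ℝ => f z / z) (nhdsWithin 0 (Set.Ioi 0)) (nhds 0) := by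
    have h1 : Filter.Tendsto (slope f 0) (nhdsWithin 0 {0}ᶜ) (nhds 0) :=
      hasDerivAt_iff_tendsto_slope.1 hDeriv
    have h2 : Filter.Tendsto (slope f 0) (nhdsWithin 0 (Set.Ioi 0)) (nhds 0) :=
      h1.mono_left (nhdsWithin_mono 0 (fun x hx => ne_of_gt hx))
    apply h2.congr'
    filter_upwards [self_mem_nhdsWithin] with z hz
    simp [slope_def_field, hf0]
  have hsl : ∀ᶠ z in nhdsWithin 0 (Set.Ioi 0), f z / z < 1 :=
    hslope.eventually_lt_const one_pos
  obtain ⟨δ₁, hδ₁, hδ₁P⟩ := Metric.mem_nhdsWithin_iff.1 hsl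
  have hlin : ∀ z : ℝ, 0 < z → z < δ₁ → f z ≤ z := by
    intro z hz hzδ
    have hmem : z ∈ Metric.ball 0 δ₁ ∩ Set.Ioi 0 := by
      constructor
      · rw [Metric.mem_ball, Real.dist_eq, sub_zero, abs_of_pos hz]; exact hzδ
      · exact hz
    have := hδ₁P hmem
    have h4 : f z / z < 1 := this
    have h5 : f z < z := by
      have := (div_lt_one hz).1 h4
      linarith
    linarith
  -- smallness of f near 0 from continuity
  have hcont0 : Filter.Tendsto f (nhds 0) (nhds 0) := by
    have := hsmooth.continuous.tendsto 0
    rwa [hf0] at this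
  have hee : (0:ℝ) < 1 / (sig + 1) ^ 2 := by positivity
  have hev : ∀ᶠ z : ℝ in nhds 0, f z < 1 / (sig + 1) ^ 2 :=
    hcont0.eventually_lt_const hee
  obtain ⟨δ₂, hδ₂, hδ₂P⟩ := Metric.eventually_nhds_iff.1 hev
  -- choose x₀ and r₀
  obtain ⟨x₀, hx₀def⟩ : ∃ y : ℝ, y = min (δ₂ / 2) (R / sig) := ⟨_, rfl⟩
  have hx₀pos : 0 < x₀ := by rw [hx₀def]; exact lt_min (by linarith) (by positivity)
  obtain ⟨r₀, hr₀def⟩ : ∃ y : ℝ, y = min (sig * x₀) (min (δ₁ / 2) 1) := ⟨_, rfl⟩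
  have hr₀pos : 0 < r₀ := by
    rw [hr₀def]
    exact lt_min (by positivity) (lt_min (by linarith) one_pos)
  refine ⟨r₀, hr₀pos, by rw [hr₀def]; exact le_trans (min_le_right _ _) (min_le_right _ _),
    sig, sig + 1, hsig, by linarith, ?_, 1, one_pos, ?_⟩
  · -- the step inequality
    intro x hx hsx
    have hxx₀ : x ≤ x₀ := by
      have h1 : sig * x ≤ sig * x₀ := le_trans hsx (by rw [hr₀def]; exact min_le_left _ _)
      exact le_of_mul_le_mul_left h1 hsig0
    have hxR : x ∈ Set.Icc 0 (R / sig) := by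
      constructor
      · exact hx.le
      · exact le_trans hxx₀ (by rw [hx₀def]; exact min_le_right _ _)
    have hxδ₂ : x < δ₂ := by
      have := le_trans hxx₀ (by rw [hx₀def]; exact min_le_left _ _ : x₀ ≤ δ₂ / 2)
      linarith
    have hfsmall : f x < 1 / (sig + 1) ^ 2 := by
      apply hδ₂P
      rw [Real.dist_eq, sub_zero, abs_of_pos hx]; exact hxδ₂
    have hfx : 0 < f x := hpos x hx
    have hfx1 : f x < 1 := by
      have : 1 / (sig + 1) ^ 2 ≤ 1 := by
        rw [div_le_one (by positivity)]
        nlinarith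
      linarith
    have hfsx : 0 < f (sig * x) := hpos _ (by positivity)
    -- unfold the doubling condition
    have hdbx := hdb x hxR
    rw [LambdaF, LambdaF, if_neg hx.ne', if_neg (by positivity : (0:ℝ) < sig * x).ne'] at hdbx
    obtain ⟨u, hudef⟩ : ∃ u : ℝ, u = Real.log (f x) := ⟨_, rfl⟩
    obtain ⟨v, hvdef⟩ : ∃ v : ℝ, v = Real.log (f (sig * x)) := ⟨_, rfl⟩
    rw [← hudef, ← hvdef] at hdbx
    have hu0 : u < 0 := by rw [hudef]; exact Real.log_neg hfx hfx1
    have hpos2 : 0 < 2 * (-1 / u) := by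
      have : 0 < -1 / u := div_pos_of_neg_of_neg (by norm_num) hu0
      linarith
    have hv0 : v < 0 := by
      by_contra hcon
      push_neg at hcon
      rcases eq_or_lt_of_le hcon with h | h
      · rw [← h] at hdbx; simp at hdbx; linarith
      · have : -1 / v < 0 := div_neg_of_neg_of_pos (by norm_num) h
        linarith
    -- from 2*(-1/u) ≤ -1/v and u,v<0 deduce u ≤ 2v
    have huv : u ≤ 2 * v := by
      have hU : (0:ℝ) < -u := by linarith
      have hV : (0:ℝ) < -v := by linarith
      have e1 : 2 * (-1 / u) = 2 / (-u) := by
        rw [div_neg, neg_div]; ring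
      have e2 : -1 / v = 1 / (-v) := by
        rw [div_neg, neg_div]
      rw [e1, e2, div_le_div_iff₀ hU hV] at hdbx
      linarith
    -- hence f x ≤ f(sig x)^2
    have hfsq : f x ≤ f (sig * x) ^ 2 := by
      have h1 : f x = Real.exp u := by rw [hudef, Real.exp_log hfx]
      have h2 : f (sig * x) = Real.exp v := by rw [hvdef, Real.exp_log hfsx]
      rw [h1, h2, ← Real.exp_nat_mul]
      apply Real.exp_le_exp.2
      push_cast
      linarith
    -- conclude lam * f x ≤ f (sig x) by comparing squares
    have hsq : ((sig + 1) * f x) ^ 2 ≤ f (sig * x) ^ 2 := by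
      have h1 : ((sig + 1) * f x) ^ 2 = ((sig + 1) ^ 2 * f x) * f x := by ring
      have h2 : (sig + 1) ^ 2 * f x ≤ 1 := by
        have h3 : f x * (sig + 1) ^ 2 < 1 := (lt_div_iff₀ (by positivity)).1 hfsmall
        nlinarith [h3]
      calc ((sig + 1) * f x) ^ 2 = ((sig + 1) ^ 2 * f x) * f x := h1
        _ ≤ 1 * f x := mul_le_mul_of_nonneg_right h2 hfx.le
        _ = f x := one_mul _
        _ ≤ f (sig * x) ^ 2 := hfsq
    exact le_of_pow_le_pow_left₀ (by norm_num) hfsx.le hsq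
  · -- linear bound
    intro a ha har
    have : a < δ₁ := by
      have : a ≤ δ₁ / 2 := le_trans har (by rw [hr₀def] ; exact le_trans (min_le_right _ _) (min_le_left _ _))
      linarith
    have := hlin a ha this
    linarith

/-- weighted integral estimate
`∫₀¹ r^{2k+1}/(f(r)+t)^{2(k+1)} dr ≤ C·[f⁻¹(t)]^{2(k+1)}/t^{2(k+1)}`. -/
theorem stmt_18 (f finv : ℝ → ℝ)
    (hf : FiniteTypeAtZero f ∨ MildlyInfiniteTypeAtZero f)
    (hinv : ∀ t ≥ (0:ℝ), 0 ≤ finv t ∧ f (finv t) = t)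
    (k : ℕ) (hk : 1 ≤ k) (M : ℝ) (hM : 0 < M) :
    ∃ C > (0:ℝ), ∀ t : ℝ, 0 < t → t < M →
      (∫ r in (0:ℝ)..1, r ^ (2 * k + 1) / (f r + t) ^ (2 * (k + 1)))
        ≤ C * (finv t) ^ (2 * (k + 1)) / t ^ (2 * (k + 1)) := by
  -- extract the common structural facts
  have hsm : StrictMonoOn f (Set.Ici 0) := by
    rcases hf with h | h
    · exact h.2.1
    · exact h.2.1
  have hnn : ∀ x ≥ (0:ℝ), 0 ≤ f x := by
    rcases hf with h | h
    · exact h.2.2.1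
    · exact h.2.2.1
  have hcont : ContinuousOn f (Set.Ici 0) := by
    rcases hf with h | h
    · exact h.1
    · exact h.1.continuous.continuousOn
  -- f 0 = 0
  have hf0 : f 0 = 0 := by
    obtain ⟨h0, hfinv0⟩ := hinv 0 le_rfl
    rcases eq_or_lt_of_le h0 with h | h
    · rw [← h] at hfinv0; exact hfinv0
    · exfalso
      have := hsm (le_refl (0:ℝ) : (0:ℝ) ∈ Set.Ici 0) (h0 : finv 0 ∈ Set.Ici 0) h
      rw [hfinv0] at this
      exact absurd this (not_lt.2 (hnn 0 le_rfl))
  have hpos : ∀ x : ℝ, 0 < x → 0 < f x := by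
    intro x hx
    have := hsm (le_refl (0:ℝ) : (0:ℝ) ∈ Set.Ici 0) (hx.le : x ∈ Set.Ici 0) hx
    rwa [hf0] at this
  have hmono : MonotoneOn f (Set.Ici 0) := hsm.monotoneOn
  -- get the setup data in either case
  have hsetup : ∃ r₀ : ℝ, 0 < r₀ ∧ r₀ ≤ 1 ∧ ∃ sig lam : ℝ, 1 < sig ∧ sig < lam ∧
      (∀ x, 0 < x → sig * x ≤ r₀ → lam * f x ≤ f (sig * x)) ∧
      ∃ K : ℝ, 0 < K ∧ ∀ a, 0 < a → a ≤ r₀ → f a ≤ K * a := by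
    rcases hf with h | h
    · exact finite_setup f h
    · exact mild_setup f h hf0
  obtain ⟨r₀, hr₀, hr₁, sig, lam, hsig, hlam, hstep, K, hK, hlin⟩ := hsetup
  -- the constant from the core bound is positive
  have hsig0 : (0:ℝ) < sig := lt_trans one_pos hsig
  have hlam0 : (0:ℝ) < lam := lt_trans hsig0 hlam
  have hq1 : (sig / lam) ^ (2 * (k + 1)) < 1 :=
    pow_lt_one₀ (le_of_lt (div_pos hsig0 hlam0)) ((div_lt_one hlam0).2 hlam) (by omega)
  have hC₁ : 0 < sig ^ (2 * (k + 1)) / (1 - (sig / lam) ^ (2 * (k + 1))) :=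
    div_pos (pow_pos hsig0 _) (by linarith)
  exact glue_bound f finv k M hinv hmono hcont hf0 hpos r₀ hr₀ hr₁ _ hC₁
    (core_bound f k sig lam r₀ hsig hlam hr₀ hmono hpos hcont hstep) K hK hlin
end
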